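/- arXiv:1903.01120 — 11 statements merged into one kernel-verified Lean document; each statement's English description precedes it below -/
import Mathlib

section
/- The minimum over all probability distributions P on 𝒳×𝒳 of max_{s∈[0,1]} [D(P‖Q×Q) + Δ_s(P)] equals the maximum over s∈[0,1] of the minimum over all probability distributions P on 𝒳×𝒳 of [D(P‖Q×Q) + Δ_s(P)], and both are equal to R_0(Q) = −log Σ_{y∈𝒴} (Σ_{x∈𝒳} Q(x)√(W(y|x)))². -/
set_option linter.unusedSectionVars false
set_option maxHeartbeats 1000000
open Real Finset

section Aux
variable {X Y : Type*} [Fintype X] [Fintype Y] [Nonempty X] [Nonempty Y]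
variable (W : X → Y → ℝ) (Q : X → ℝ)

noncomputable def Kk (s : ℝ) (x x' : X) : ℝ := ∑ y, W x y ^ (1 - s) * W x' y ^ s

noncomputable def Ff (s : ℝ) : ℝ := ∑ p : X × X, Q p.1 * Q p.2 * Kk W s p.1 p.2

noncomputable def Pd (s : ℝ) (p : X × X) : ℝ := Q p.1 * Q p.2 * Kk W s p.1 p.2 / Ff W Q s

variable (hWpos : ∀ x y, 0 < W x y) (hQpos : ∀ x, 0 < Q x)

include hWpos in
lemma Kk_pos (s : ℝ) (x x' : X) : 0 < Kk W s x x' := by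
  apply Finset.sum_pos (fun y _ => ?_) univ_nonempty
  exact mul_pos (rpow_pos_of_pos (hWpos x y) _) (rpow_pos_of_pos (hWpos x' y) _)

include hWpos hQpos in
lemma Ff_pos (s : ℝ) : 0 < Ff W Q s := by
  apply Finset.sum_pos (fun p _ => ?_) univ_nonempty
  exact mul_pos (mul_pos (hQpos p.1) (hQpos p.2)) (Kk_pos W hWpos s p.1 p.2)

include hWpos hQpos in
lemma Pd_pos (s : ℝ) (p : X × X) : 0 < Pd W Q s p :=
  div_pos (mul_pos (mul_pos (hQpos p.1) (hQpos p.2)) (Kk_pos W hWpos s p.1 p.2))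
    (Ff_pos W Q hWpos hQpos s)

include hWpos hQpos in
lemma Pd_sum (s : ℝ) : ∑ p : X × X, Pd W Q s p = 1 := by
  unfold Pd
  rw [← Finset.sum_div]
  exact div_self (Ff_pos W Q hWpos hQpos s).ne'

-- elementary: a - c ≤ a log(a/c)
lemma klaux {a c : ℝ} (ha : 0 ≤ a) (hc : 0 < c) : a - c ≤ a * Real.log (a / c) := by
  rcases eq_or_lt_of_le ha with h | h
  · simp [← h]; linarith
  · have h1 : Real.log (c / a) ≤ c / a - 1 := Real.log_le_sub_one_of_pos (by positivity)
    have h2 : Real.log (a / c) = -Real.log (c / a) := by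
      rw [← Real.log_inv, inv_div]
    have h3 : 1 - c / a ≤ Real.log (a / c) := by rw [h2]; linarith
    have := mul_le_mul_of_nonneg_left h3 h.le
    calc a - c = a * (1 - c / a) := by field_simp
    _ ≤ a * Real.log (a / c) := this



include hWpos hQpos in
lemma gibbs_le (s : ℝ) (P : X × X → ℝ) (hP : ∀ p, 0 ≤ P p) (hP1 : ∑ p : X × X, P p = 1) :
    -Real.log (Ff W Q s) ≤
      (∑ p : X × X, P p * Real.log (P p / (Q p.1 * Q p.2))) +
      ∑ p : X × X, P p * (-Real.log (Kk W s p.1 p.2)) := by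
  have hf := Ff_pos W Q hWpos hQpos s
  have key : ∀ p : X × X, P p * Real.log (P p / (Q p.1 * Q p.2)) +
      P p * (-Real.log (Kk W s p.1 p.2)) =
      P p * Real.log (P p / Pd W Q s p) - P p * Real.log (Ff W Q s) := by
    intro p
    rcases eq_or_lt_of_le (hP p) with h | h
    · simp [← h]
    · have hq1 := hQpos p.1
      have hq2 := hQpos p.2
      have hk := Kk_pos W hWpos s p.1 p.2
      have hPd : Pd W Q s p = Q p.1 * Q p.2 * Kk W s p.1 p.2 / Ff W Q s := rfl
      rw [hPd, Real.log_div h.ne' (by positivity), Real.log_div h.ne' (by positivity),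
        Real.log_div (by positivity) hf.ne', Real.log_mul (by positivity) hk.ne']
      ring
  rw [← Finset.sum_add_distrib]
  calc -Real.log (Ff W Q s)
      = (∑ p : X × X, (P p - Pd W Q s p)) - Real.log (Ff W Q s) := by
        rw [Finset.sum_sub_distrib, hP1, Pd_sum W Q hWpos hQpos s]; ring
    _ ≤ (∑ p : X × X, P p * Real.log (P p / Pd W Q s p)) - Real.log (Ff W Q s) := by
        have := Finset.sum_le_sum fun (p : X × X) (_ : p ∈ Finset.univ) =>
          klaux (hP p) (Pd_pos W Q hWpos hQpos s p)
        linarith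
    _ = ∑ p : X × X, (P p * Real.log (P p / Pd W Q s p) - P p * Real.log (Ff W Q s)) := by
        rw [Finset.sum_sub_distrib, ← Finset.sum_mul, hP1, one_mul]
    _ = _ := by exact Finset.sum_congr rfl fun p _ => (key p).symm

include hWpos hQpos in
lemma gibbs_eq (s : ℝ) :
    (∑ p : X × X, Pd W Q s p * Real.log (Pd W Q s p / (Q p.1 * Q p.2))) +
      ∑ p : X × X, Pd W Q s p * (-Real.log (Kk W s p.1 p.2)) = -Real.log (Ff W Q s) := by
  have hf := Ff_pos W Q hWpos hQpos s
  have key : ∀ p : X × X, Pd W Q s p * Real.log (Pd W Q s p / (Q p.1 * Q p.2)) +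
      Pd W Q s p * (-Real.log (Kk W s p.1 p.2)) = Pd W Q s p * (-Real.log (Ff W Q s)) := by
    intro p
    have hq1 := hQpos p.1
    have hq2 := hQpos p.2
    have hk := Kk_pos W hWpos s p.1 p.2
    have hPd : Pd W Q s p = Q p.1 * Q p.2 * Kk W s p.1 p.2 / Ff W Q s := rfl
    have : Pd W Q s p / (Q p.1 * Q p.2) = Kk W s p.1 p.2 / Ff W Q s := by
      rw [hPd]; field_simp
    rw [this, Real.log_div hk.ne' hf.ne']
    ring
  rw [← Finset.sum_add_distrib, Finset.sum_congr rfl fun p _ => key p, ← Finset.sum_mul,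
    Pd_sum W Q hWpos hQpos s, one_mul]


-- AM-GM style: u^(1/2) v^(1/2) ≤ (u^(1-s) v^s + u^s v^(1-s))/2
lemma amgm {u v : ℝ} (hu : 0 < u) (hv : 0 < v) (s : ℝ) :
    u ^ ((1:ℝ)/2) * v ^ ((1:ℝ)/2) ≤ (u ^ (1-s) * v ^ s + u ^ s * v ^ (1-s)) / 2 := by
  set a := u ^ (1-s) * v ^ s with ha
  set b := u ^ s * v ^ (1-s) with hb
  have hap : 0 < a := mul_pos (rpow_pos_of_pos hu _) (rpow_pos_of_pos hv _)
  have hbp : 0 < b := mul_pos (rpow_pos_of_pos hu _) (rpow_pos_of_pos hv _)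
  have hab : a * b = u * v := by
    rw [ha, hb]
    rw [show u ^ (1-s) * v ^ s * (u ^ s * v ^ (1-s)) =
      (u ^ (1-s) * u ^ s) * (v ^ s * v ^ (1-s)) by ring,
      ← Real.rpow_add hu, ← Real.rpow_add hv]
    norm_num
  have hL : u ^ ((1:ℝ)/2) * v ^ ((1:ℝ)/2) = Real.sqrt (a * b) := by
    rw [hab, Real.sqrt_mul hu.le, Real.sqrt_eq_rpow, Real.sqrt_eq_rpow]
  rw [hL, Real.sqrt_mul hap.le]
  nlinarith [sq_nonneg (Real.sqrt a - Real.sqrt b), Real.sq_sqrt hap.le, Real.sq_sqrt hbp.le,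
    Real.sqrt_nonneg a, Real.sqrt_nonneg b]

include hWpos in
lemma Kk_swap (s : ℝ) (x x' : X) : Kk W s x' x = Kk W (1-s) x x' := by
  unfold Kk
  refine Finset.sum_congr rfl fun y _ => ?_
  rw [show (1 : ℝ) - (1 - s) = s by ring]
  ring

include hWpos hQpos in
lemma Ff_swap (s : ℝ) : (∑ p : X × X, Q p.1 * Q p.2 * Kk W s p.2 p.1) = Ff W Q s := by
  unfold Ff
  exact Fintype.sum_equiv (Equiv.prodComm X X)
    (fun p => Q p.1 * Q p.2 * Kk W s p.2 p.1)
    (fun p => Q p.1 * Q p.2 * Kk W s p.1 p.2)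
    (fun p => by
      simp only [Equiv.prodComm_apply, Prod.fst_swap, Prod.snd_swap]
      ring)

include hWpos hQpos in
lemma Ff_half_le (s : ℝ) : Ff W Q (1/2) ≤ Ff W Q s := by
  have hK : ∀ x x' : X, Kk W ((1:ℝ)/2) x x' ≤ (Kk W s x x' + Kk W s x' x) / 2 := by
    intro x x'
    unfold Kk
    rw [← Finset.sum_add_distrib, Finset.sum_div]
    refine Finset.sum_le_sum fun y _ => ?_
    have h := amgm (hWpos x y) (hWpos x' y) s
    calc W x y ^ (1 - (1:ℝ)/2) * W x' y ^ ((1:ℝ)/2)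
        = W x y ^ ((1:ℝ)/2) * W x' y ^ ((1:ℝ)/2) := by norm_num
      _ ≤ (W x y ^ (1-s) * W x' y ^ s + W x y ^ s * W x' y ^ (1-s)) / 2 := h
      _ = _ := by ring
  calc Ff W Q (1/2)
      ≤ ∑ p : X × X, (Q p.1 * Q p.2 * Kk W s p.1 p.2 + Q p.1 * Q p.2 * Kk W s p.2 p.1) / 2 := by
        unfold Ff
        refine Finset.sum_le_sum fun p _ => ?_
        have hq : (0:ℝ) ≤ Q p.1 * Q p.2 := by
          have := hQpos p.1; have := hQpos p.2; positivity
        calc Q p.1 * Q p.2 * Kk W (1/2) p.1 p.2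
            ≤ Q p.1 * Q p.2 * ((Kk W s p.1 p.2 + Kk W s p.2 p.1) / 2) :=
              mul_le_mul_of_nonneg_left (hK p.1 p.2) hq
          _ = _ := by ring
    _ = ((∑ p : X × X, Q p.1 * Q p.2 * Kk W s p.1 p.2) +
          ∑ p : X × X, Q p.1 * Q p.2 * Kk W s p.2 p.1) / 2 := by
        rw [← Finset.sum_add_distrib, Finset.sum_div]
    _ = Ff W Q s := by
        have h1 : (∑ p : X × X, Q p.1 * Q p.2 * Kk W s p.1 p.2) = Ff W Q s := rfl
        rw [h1, Ff_swap W Q hWpos hQpos s]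
        ring

include hWpos hQpos in
lemma Ff_half_eq : Ff W Q (1/2) = ∑ y, (∑ x, Q x * Real.sqrt (W x y)) ^ 2 := by
  have hterm : ∀ y, (∑ x, Q x * Real.sqrt (W x y)) ^ 2
      = ∑ x, ∑ x', (Q x * Real.sqrt (W x y)) * (Q x' * Real.sqrt (W x' y)) := by
    intro y
    rw [sq, Finset.sum_mul_sum]
  calc Ff W Q (1/2)
      = ∑ x, ∑ x', ∑ y, (Q x * Real.sqrt (W x y)) * (Q x' * Real.sqrt (W x' y)) := by
        unfold Ff Kk
        rw [Fintype.sum_prod_type]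
        refine Finset.sum_congr rfl fun x _ => Finset.sum_congr rfl fun x' _ => ?_
        rw [Finset.mul_sum]
        refine Finset.sum_congr rfl fun y _ => ?_
        rw [Real.sqrt_eq_rpow, Real.sqrt_eq_rpow]
        rw [show (1:ℝ) - 1/2 = 1/2 by norm_num]
        ring
    _ = ∑ y, ∑ x, ∑ x', (Q x * Real.sqrt (W x y)) * (Q x' * Real.sqrt (W x' y)) := by
        exact (Finset.sum_congr rfl fun x _ => Finset.sum_comm).trans Finset.sum_comm
    _ = _ := by
        exact Finset.sum_congr rfl fun y _ => (hterm y).symm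

include hWpos in
lemma Kk_cs (s : ℝ) (x x' : X) :
    Kk W ((1:ℝ)/2) x x' ^ 2 ≤ Kk W s x x' * Kk W s x' x := by
  have h := Finset.sum_mul_sq_le_sq_mul_sq Finset.univ
    (fun y => W x y ^ ((1-s)/2) * W x' y ^ (s/2))
    (fun y => W x y ^ (s/2) * W x' y ^ ((1-s)/2))
  have h1 : ∀ y, (W x y ^ ((1-s)/2) * W x' y ^ (s/2)) * (W x y ^ (s/2) * W x' y ^ ((1-s)/2))
      = W x y ^ (1 - (1:ℝ)/2) * W x' y ^ ((1:ℝ)/2) := by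
    intro y
    rw [show W x y ^ ((1-s)/2) * W x' y ^ (s/2) * (W x y ^ (s/2) * W x' y ^ ((1-s)/2))
      = (W x y ^ ((1-s)/2) * W x y ^ (s/2)) * (W x' y ^ (s/2) * W x' y ^ ((1-s)/2)) by ring,
      ← Real.rpow_add (hWpos x y), ← Real.rpow_add (hWpos x' y),
      show (1-s)/2 + s/2 = (1:ℝ)/2 by ring, show s/2 + (1-s)/2 = (1:ℝ)/2 by ring]
    norm_num
  have h2 : ∀ y, (W x y ^ ((1-s)/2) * W x' y ^ (s/2)) ^ 2
      = W x y ^ (1-s) * W x' y ^ s := by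
    intro y
    rw [mul_pow, sq, sq, ← Real.rpow_add (hWpos x y), ← Real.rpow_add (hWpos x' y)]
    norm_num
  have h3 : ∀ y, (W x y ^ (s/2) * W x' y ^ ((1-s)/2)) ^ 2
      = W x' y ^ (1 - s) * W x y ^ s := by
    intro y
    rw [mul_pow, sq, sq, ← Real.rpow_add (hWpos x y), ← Real.rpow_add (hWpos x' y)]
    rw [show s/2 + s/2 = s by ring, show (1-s)/2 + (1-s)/2 = 1-s by ring]
    ring
  simp only [h1, h2, h3] at h
  exact h

include hWpos in
lemma Kk_half_symm (x x' : X) : Kk W ((1:ℝ)/2) x x' = Kk W ((1:ℝ)/2) x' x := by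
  unfold Kk
  refine Finset.sum_congr rfl fun y _ => ?_
  rw [show (1:ℝ) - 1/2 = 1/2 by norm_num]
  ring

include hWpos hQpos in
lemma Pd_half_symm (p : X × X) : Pd W Q (1/2) p = Pd W Q (1/2) p.swap := by
  unfold Pd
  rw [Prod.fst_swap, Prod.snd_swap, Kk_half_symm W hWpos p.1 p.2]
  ring

include hWpos hQpos in
lemma Delta_max {s : ℝ} :
    ∑ p : X × X, Pd W Q (1/2) p * (-Real.log (Kk W s p.1 p.2)) ≤
      ∑ p : X × X, Pd W Q (1/2) p * (-Real.log (Kk W (1/2) p.1 p.2)) := by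
  have hkey : ∀ p : X × X, 2 * Real.log (Kk W ((1:ℝ)/2) p.1 p.2) ≤
      Real.log (Kk W s p.1 p.2) + Real.log (Kk W s p.2 p.1) := by
    intro p
    have hcs := Kk_cs W hWpos s p.1 p.2
    have h1 := Kk_pos W hWpos ((1:ℝ)/2) p.1 p.2
    have h2 := Kk_pos W hWpos s p.1 p.2
    have h3 := Kk_pos W hWpos s p.2 p.1
    have := Real.log_le_log (by positivity) hcs
    rw [Real.log_pow, Real.log_mul h2.ne' h3.ne'] at this
    exact_mod_cast this
  have hswap : ∑ p : X × X, Pd W Q (1/2) p * Real.log (Kk W s p.2 p.1)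
      = ∑ p : X × X, Pd W Q (1/2) p * Real.log (Kk W s p.1 p.2) := by
    refine Fintype.sum_equiv (Equiv.prodComm X X) _ _ fun p => ?_
    simp only [Equiv.prodComm_apply, Prod.fst_swap, Prod.snd_swap]
    rw [← Pd_half_symm W Q hWpos hQpos p]
  have hmul : ∀ p : X × X, Pd W Q (1/2) p * (2 * Real.log (Kk W ((1:ℝ)/2) p.1 p.2)) ≤
      Pd W Q (1/2) p * (Real.log (Kk W s p.1 p.2) + Real.log (Kk W s p.2 p.1)) := fun p =>
    mul_le_mul_of_nonneg_left (hkey p) (Pd_pos W Q hWpos hQpos (1/2) p).le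
  have hsum := Finset.sum_le_sum fun (p : X × X) (_ : p ∈ Finset.univ) => hmul p
  rw [Finset.sum_congr rfl (fun (p : X × X) _ => by
      rw [mul_add] : ∀ p ∈ Finset.univ, Pd W Q (1/2) p *
        (Real.log (Kk W s p.1 p.2) + Real.log (Kk W s p.2 p.1)) =
        Pd W Q (1/2) p * Real.log (Kk W s p.1 p.2)
        + Pd W Q (1/2) p * Real.log (Kk W s p.2 p.1))] at hsum
  rw [Finset.sum_add_distrib, hswap] at hsum
  have : ∑ p : X × X, Pd W Q (1/2) p * Real.log (Kk W ((1:ℝ)/2) p.1 p.2) ≤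
      ∑ p : X × X, Pd W Q (1/2) p * Real.log (Kk W s p.1 p.2) := by
    have hL : ∑ p : X × X, Pd W Q (1/2) p * (2 * Real.log (Kk W ((1:ℝ)/2) p.1 p.2))
        = 2 * ∑ p : X × X, Pd W Q (1/2) p * Real.log (Kk W ((1:ℝ)/2) p.1 p.2) := by
      rw [Finset.mul_sum]
      exact Finset.sum_congr rfl fun p _ => by ring
    rw [hL] at hsum
    linarith
  have e1 : ∀ p : X × X, Pd W Q (1/2) p * (-Real.log (Kk W s p.1 p.2))
      = -(Pd W Q (1/2) p * Real.log (Kk W s p.1 p.2)) := fun p => by ring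
  have e2 : ∀ p : X × X, Pd W Q (1/2) p * (-Real.log (Kk W (1/2) p.1 p.2))
      = -(Pd W Q (1/2) p * Real.log (Kk W ((1:ℝ)/2) p.1 p.2)) := fun p => by ring
  simp only [e1, e2, Finset.sum_neg_distrib]
  linarith

include hWpos in
lemma Kk_ge {m : ℝ} (hm0 : 0 < m) (hm : ∀ x y, m ≤ W x y) {s : ℝ}
    (hs : s ∈ Set.Icc (0:ℝ) 1) (x x' : X) : m ≤ Kk W s x x' := by
  obtain ⟨y0⟩ := (inferInstance : Nonempty Y)
  have h1 : m ^ (1-s) * m ^ s ≤ W x y0 ^ (1-s) * W x' y0 ^ s := by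
    apply mul_le_mul
    · exact Real.rpow_le_rpow hm0.le (hm x y0) (by linarith [hs.2])
    · exact Real.rpow_le_rpow hm0.le (hm x' y0) hs.1
    · exact (Real.rpow_pos_of_pos hm0 _).le
    · exact (Real.rpow_pos_of_pos (hWpos x y0) _).le
  have h2 : m ^ (1-s) * m ^ s = m := by
    rw [← Real.rpow_add hm0]; norm_num
  have h3 : W x y0 ^ (1-s) * W x' y0 ^ s ≤ Kk W s x x' := by
    apply Finset.single_le_sum (f := fun y => W x y ^ (1-s) * W x' y ^ s)
      (fun y _ => mul_nonneg (Real.rpow_nonneg (hWpos x y).le _)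
        (Real.rpow_nonneg (hWpos x' y).le _)) (Finset.mem_univ y0)
  linarith

end Aux

/-- The min over probability distributions `P` on `𝒳 × 𝒳` of
`max_{s ∈ [0,1]} [D(P‖Q×Q) + Δ_s(P)]` equals the max over `s ∈ [0,1]` of the min
over `P` of `[D(P‖Q×Q) + Δ_s(P)]`, and both equal
`R₀(Q) = -log ∑_y (∑_x Q x √(W(y|x)))²`. -/
theorem stmt_2 {X Y : Type*} [Fintype X] [Fintype Y] [Nonempty X] [Nonempty Y]
    (W : X → Y → ℝ) (hWpos : ∀ x y, 0 < W x y) (hWsum : ∀ x, ∑ y, W x y = 1)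
    (Q : X → ℝ) (hQpos : ∀ x, 0 < Q x) (hQsum : ∑ x, Q x = 1) :
    let d : ℝ → X → X → ℝ := fun s x x' => -Real.log (∑ y, W x y ^ (1 - s) * W x' y ^ s)
    let Δ : ℝ → (X × X → ℝ) → ℝ := fun s P => ∑ p : X × X, P p * d s p.1 p.2
    let D : (X × X → ℝ) → ℝ := fun P => ∑ p : X × X, P p * Real.log (P p / (Q p.1 * Q p.2))
    let Prob : Set (X × X → ℝ) := {P | (∀ p, 0 ≤ P p) ∧ ∑ p : X × X, P p = 1}
    let R0 : ℝ := -Real.log (∑ y, (∑ x, Q x * Real.sqrt (W x y)) ^ 2)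
    sInf {v | ∃ P ∈ Prob, v = sSup {w | ∃ s ∈ Set.Icc (0 : ℝ) 1, w = D P + Δ s P}} = R0 ∧
    sSup {v | ∃ s ∈ Set.Icc (0 : ℝ) 1, v = sInf {w | ∃ P ∈ Prob, w = D P + Δ s P}} = R0 := by
  intro d Δ D Prob R0
  obtain ⟨p0, _, hp0⟩ := Finset.exists_min_image (Finset.univ : Finset (X × Y))
    (fun p => W p.1 p.2) ⟨(Classical.arbitrary X, Classical.arbitrary Y), Finset.mem_univ _⟩
  set m := W p0.1 p0.2 with hm_def
  have hm0 : 0 < m := hWpos p0.1 p0.2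
  have hm_le : ∀ x y, m ≤ W x y := fun x y => hp0 (x, y) (Finset.mem_univ _)
  have hobj : ∀ (s : ℝ) (P : X × X → ℝ), D P + Δ s P =
      (∑ p : X × X, P p * Real.log (P p / (Q p.1 * Q p.2))) +
      ∑ p : X × X, P p * (-Real.log (Kk W s p.1 p.2)) := fun _ _ => rfl
  have hR0 : R0 = -Real.log (Ff W Q (1/2)) := by
    show -Real.log _ = _
    rw [Ff_half_eq W Q hWpos hQpos]
  have hPdmem : ∀ s : ℝ, Pd W Q s ∈ Prob :=
    fun s => ⟨fun p => (Pd_pos W Q hWpos hQpos s p).le, Pd_sum W Q hWpos hQpos s⟩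
  have hlb : ∀ (s : ℝ) (P : X × X → ℝ), P ∈ Prob → -Real.log (Ff W Q s) ≤ D P + Δ s P := by
    intro s P hP
    rw [hobj]
    exact gibbs_le W Q hWpos hQpos s P hP.1 hP.2
  have heq : ∀ s : ℝ, D (Pd W Q s) + Δ s (Pd W Q s) = -Real.log (Ff W Q s) := by
    intro s
    rw [hobj]
    exact gibbs_eq W Q hWpos hQpos s
  have hmin : ∀ s : ℝ, sInf {w | ∃ P ∈ Prob, w = D P + Δ s P} = -Real.log (Ff W Q s) := by
    intro s
    apply le_antisymm
    · exact csInf_le ⟨-Real.log (Ff W Q s), by rintro w ⟨P, hP, rfl⟩; exact hlb s P hP⟩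
        ⟨Pd W Q s, hPdmem s, (heq s).symm⟩
    · exact le_csInf ⟨_, Pd W Q s, hPdmem s, rfl⟩ (by rintro w ⟨P, hP, rfl⟩; exact hlb s P hP)
  have hle_R0 : ∀ s : ℝ, -Real.log (Ff W Q s) ≤ R0 := by
    intro s
    rw [hR0]
    have := Real.log_le_log (Ff_pos W Q hWpos hQpos (1/2)) (Ff_half_le W Q hWpos hQpos s)
    linarith
  have hsup2 : sSup {v | ∃ s ∈ Set.Icc (0:ℝ) 1, v = sInf {w | ∃ P ∈ Prob, w = D P + Δ s P}} = R0 := by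
    apply le_antisymm
    · refine csSup_le ⟨sInf {w | ∃ P ∈ Prob, w = D P + Δ (1/2) P},
        ⟨1/2, ⟨by norm_num, by norm_num⟩, rfl⟩⟩ ?_
      rintro v ⟨s, hs, rfl⟩
      rw [hmin s]; exact hle_R0 s
    · apply le_csSup
      · exact ⟨R0, by rintro v ⟨s, hs, rfl⟩; rw [hmin s]; exact hle_R0 s⟩
      · exact ⟨1/2, ⟨by norm_num, by norm_num⟩, by rw [hmin]; exact hR0⟩
  have hdbound : ∀ s ∈ Set.Icc (0:ℝ) 1, ∀ x x', d s x x' ≤ -Real.log m := by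
    intro s hs x x'
    show -Real.log (Kk W s x x') ≤ _
    have := Real.log_le_log hm0 (Kk_ge W hWpos hm0 hm_le hs x x')
    linarith
  have hDelta_bdd : ∀ P ∈ Prob, ∀ s ∈ Set.Icc (0:ℝ) 1, Δ s P ≤ -Real.log m := by
    intro P hP s hs
    calc Δ s P = ∑ p : X × X, P p * d s p.1 p.2 := rfl
      _ ≤ ∑ p : X × X, P p * (-Real.log m) :=
        Finset.sum_le_sum fun p _ => mul_le_mul_of_nonneg_left (hdbound s hs p.1 p.2) (hP.1 p)
      _ = -Real.log m := by rw [← Finset.sum_mul, hP.2, one_mul]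
  have hbddA : ∀ P ∈ Prob, BddAbove {w | ∃ s ∈ Set.Icc (0:ℝ) 1, w = D P + Δ s P} := by
    intro P hP
    exact ⟨D P + (-Real.log m), by
      rintro w ⟨s, hs, rfl⟩
      have := hDelta_bdd P hP s hs
      have : Δ s P ≤ -Real.log m := this
      linarith⟩
  have hgeR0 : ∀ P ∈ Prob, R0 ≤ sSup {w | ∃ s ∈ Set.Icc (0:ℝ) 1, w = D P + Δ s P} := by
    intro P hP
    have hmem : D P + Δ (1/2) P ∈ {w | ∃ s ∈ Set.Icc (0:ℝ) 1, w = D P + Δ s P} :=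
      ⟨1/2, ⟨by norm_num, by norm_num⟩, rfl⟩
    have h1 : R0 ≤ D P + Δ (1/2) P := by rw [hR0]; exact hlb (1/2) P hP
    exact h1.trans (le_csSup (hbddA P hP) hmem)
  have hPstar : sSup {w | ∃ s ∈ Set.Icc (0:ℝ) 1,
      w = D (Pd W Q (1/2)) + Δ s (Pd W Q (1/2))} = R0 := by
    apply le_antisymm
    · refine csSup_le ⟨D (Pd W Q (1/2)) + Δ (1/2) (Pd W Q (1/2)),
        ⟨1/2, ⟨by norm_num, by norm_num⟩, rfl⟩⟩ ?_
      rintro w ⟨s, hs, rfl⟩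
      have hΔ : Δ s (Pd W Q (1/2)) ≤ Δ (1/2) (Pd W Q (1/2)) := by
        show (∑ p : X × X, Pd W Q (1/2) p * (-Real.log (Kk W s p.1 p.2))) ≤
          ∑ p : X × X, Pd W Q (1/2) p * (-Real.log (Kk W (1/2) p.1 p.2))
        exact Delta_max W Q hWpos hQpos
      have h2 := heq (1/2)
      rw [hR0]
      linarith
    · exact le_csSup (hbddA _ (hPdmem (1/2)))
        ⟨1/2, ⟨by norm_num, by norm_num⟩, by rw [hR0, ← heq (1/2)]⟩
  refine ⟨?_, hsup2⟩
  apply le_antisymm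
  · exact csInf_le ⟨R0, by rintro v ⟨P, hP, rfl⟩; exact hgeR0 P hP⟩
      ⟨Pd W Q (1/2), hPdmem (1/2), hPstar.symm⟩
  · exact le_csInf ⟨_, Pd W Q (1/2), hPdmem (1/2), rfl⟩
      (by rintro v ⟨P, hP, rfl⟩; exact hgeR0 P hP)
end

section
/- Let P be a probability distribution on 𝒳×𝒳 and define its symmetrization P̄ by P̄(x,x') = (P(x,x') + P(x',x))/2. Then, with Δ(P) = max_{s∈[0,1]} Δ_s(P), one has Δ(P̄) ≤ Δ(P) and D(P̄‖Q×Q) ≤ D(P‖Q×Q). -/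
lemma kl_half_aux (a b c : ℝ) (ha : 0 ≤ a) (hb : 0 ≤ b) (hc : 0 < c) :
    ((a + b) / 2) * Real.log (((a + b) / 2) / c) ≤
      (a * Real.log (a / c) + b * Real.log (b / c)) / 2 := by
  have key : ∀ x : ℝ, 0 ≤ x → x * Real.log (x / c) = x * Real.log x - x * Real.log c := by
    intro x hx
    rcases eq_or_lt_of_le hx with h | h
    · simp [← h]
    · rw [Real.log_div h.ne' hc.ne']; ring
  have hconv := Real.convexOn_mul_log.2 (Set.mem_Ici.2 ha) (Set.mem_Ici.2 hb)
    (by norm_num : (0:ℝ) ≤ 1/2) (by norm_num : (0:ℝ) ≤ 1/2) (by norm_num)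
  simp only [smul_eq_mul] at hconv
  have hm : (0:ℝ) ≤ (a + b) / 2 := by linarith
  rw [key _ hm, key _ ha, key _ hb]
  have he : (a + b) / 2 = 1/2 * a + 1/2 * b := by ring
  rw [he]
  nlinarith [hconv]

/-- For a probability distribution `P` on `𝒳 × 𝒳` and its
symmetrization `P̄(x,x') = (P(x,x') + P(x',x))/2`, with `Δ(P) = max_{s∈[0,1]} Δ_s(P)`,
one has `Δ(P̄) ≤ Δ(P)` and `D(P̄‖Q×Q) ≤ D(P‖Q×Q)`. -/
theorem stmt_3 {X Y : Type*} [Fintype X] [Fintype Y] [Nonempty X] [Nonempty Y]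
    (W : X → Y → ℝ) (hWpos : ∀ x y, 0 < W x y) (hWsum : ∀ x, ∑ y, W x y = 1)
    (Q : X → ℝ) (hQpos : ∀ x, 0 < Q x) (hQsum : ∑ x, Q x = 1)
    (P : X × X → ℝ) (hPnn : ∀ p, 0 ≤ P p) (hPsum : ∑ p : X × X, P p = 1) :
    let d : ℝ → X → X → ℝ := fun s x x' => -Real.log (∑ y, W x y ^ (1 - s) * W x' y ^ s)
    let Δs : ℝ → (X × X → ℝ) → ℝ := fun s P' => ∑ p : X × X, P' p * d s p.1 p.2
    let Δ : (X × X → ℝ) → ℝ := fun P' => sSup {w | ∃ s ∈ Set.Icc (0 : ℝ) 1, w = Δs s P'}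
    let D : (X × X → ℝ) → ℝ := fun P' => ∑ p : X × X, P' p * Real.log (P' p / (Q p.1 * Q p.2))
    let Pbar : X × X → ℝ := fun p => (P p + P (p.2, p.1)) / 2
    Δ Pbar ≤ Δ P ∧ D Pbar ≤ D P := by
  intro d Δs Δ D Pbar
  -- W ≤ 1
  have hWle1 : ∀ x y, W x y ≤ 1 := by
    intro x y
    calc W x y ≤ ∑ y', W x y' :=
          Finset.single_le_sum (fun y' _ => (hWpos x y').le) (Finset.mem_univ y)
      _ = 1 := hWsum x
  -- the rpow sum is bounded below by ∑ W x y * W x' y, uniformly in s ∈ [0,1]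
  have hlow : ∀ s ∈ Set.Icc (0:ℝ) 1, ∀ x x' : X,
      ∑ y, W x y * W x' y ≤ ∑ y, W x y ^ (1 - s) * W x' y ^ s := by
    rintro s ⟨hs0, hs1⟩ x x'
    apply Finset.sum_le_sum
    intro y _
    have h1 : W x y ≤ W x y ^ (1 - s) := by
      have := Real.rpow_le_rpow_of_exponent_ge (hWpos x y) (hWle1 x y)
        (by linarith : 1 - s ≤ 1)
      rwa [Real.rpow_one] at this
    have h2 : W x' y ≤ W x' y ^ s := by
      have := Real.rpow_le_rpow_of_exponent_ge (hWpos x' y) (hWle1 x' y)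
        (by linarith : s ≤ 1)
      rwa [Real.rpow_one] at this
    exact mul_le_mul h1 h2 (hWpos x' y).le (Real.rpow_nonneg (hWpos x y).le _)
  have hcpos : ∀ x x' : X, 0 < ∑ y, W x y * W x' y := fun x x' =>
    Finset.sum_pos (fun y _ => mul_pos (hWpos x y) (hWpos x' y)) Finset.univ_nonempty
  -- d bounded above uniformly in s ∈ [0,1]
  have hdle : ∀ s ∈ Set.Icc (0:ℝ) 1, ∀ x x' : X,
      d s x x' ≤ -Real.log (∑ y, W x y * W x' y) := by
    intro s hs x x'
    exact neg_le_neg (Real.log_le_log (hcpos x x') (hlow s hs x x'))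
  -- d symmetry : d s x' x = d (1-s) x x'
  have hdsymm : ∀ (s : ℝ) (x x' : X), d s x' x = d (1 - s) x x' := by
    intro s x x'
    simp only [d]
    congr 1
    rw [show (1 : ℝ) - (1 - s) = s by ring]
    congr 1
    apply Finset.sum_congr rfl
    intro y _
    exact mul_comm _ _
  -- nonnegativity of Pbar
  have hPbnn : ∀ p, 0 ≤ Pbar p := fun p => by
    have := hPnn p; have := hPnn (p.2, p.1); simp only [Pbar]; linarith
  -- sets
  set SP := {w | ∃ s ∈ Set.Icc (0:ℝ) 1, w = Δs s P} with hSP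
  set SPb := {w | ∃ s ∈ Set.Icc (0:ℝ) 1, w = Δs s Pbar} with hSPb
  have hbdd : BddAbove SP := by
    refine ⟨∑ p : X × X, P p * (-Real.log (∑ y, W p.1 y * W p.2 y)), ?_⟩
    rintro w ⟨s, hs, rfl⟩
    exact Finset.sum_le_sum fun p _ =>
      mul_le_mul_of_nonneg_left (hdle s hs p.1 p.2) (hPnn p)
  have hmemΔ : ∀ s ∈ Set.Icc (0:ℝ) 1, Δs s P ∈ SP := fun s hs => ⟨s, hs, rfl⟩
  constructor
  · -- Δ Pbar ≤ Δ P
    refine csSup_le ⟨Δs 0 Pbar, 0, ⟨le_refl _, zero_le_one⟩, rfl⟩ ?_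
    rintro w ⟨s, hs, rfl⟩
    obtain ⟨hs0, hs1⟩ := hs
    have hA : Δs s P ≤ Δ P := le_csSup hbdd (hmemΔ s ⟨hs0, hs1⟩)
    have hB : Δs (1 - s) P ≤ Δ P :=
      le_csSup hbdd (hmemΔ (1 - s) ⟨by linarith, by linarith⟩)
    have hsplit : Δs s Pbar = (Δs s P + Δs (1 - s) P) / 2 := by
      have hre : ∑ p : X × X, P (p.2, p.1) * d s p.1 p.2 = Δs (1 - s) P :=
        Fintype.sum_equiv (Equiv.prodComm X X)
          (fun p : X × X => P (p.2, p.1) * d s p.1 p.2)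
          (fun p : X × X => P p * d (1 - s) p.1 p.2)
          (fun p => show P (p.2, p.1) * d s p.1 p.2
              = P (p.2, p.1) * d (1 - s) p.2 p.1 from by rw [hdsymm s p.2 p.1])
      rw [← hre]
      simp only [Δs, Pbar]
      rw [← Finset.sum_add_distrib, Finset.sum_div]
      exact Finset.sum_congr rfl fun p _ => by ring
    rw [hsplit]
    linarith
  · -- D Pbar ≤ D P
    have step : D Pbar ≤ ∑ p : X × X,
        (P p * Real.log (P p / (Q p.1 * Q p.2)) +
         P (p.2, p.1) * Real.log (P (p.2, p.1) / (Q p.1 * Q p.2))) / 2 := by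
      apply Finset.sum_le_sum
      intro p _
      exact kl_half_aux (P p) (P (p.2, p.1)) (Q p.1 * Q p.2) (hPnn p) (hPnn (p.2, p.1))
        (mul_pos (hQpos p.1) (hQpos p.2))
    have hre2 : ∑ p : X × X, P (p.2, p.1) * Real.log (P (p.2, p.1) / (Q p.1 * Q p.2))
        = D P := by
      simp only [D]
      exact Fintype.sum_equiv (Equiv.prodComm X X)
        (fun p : X × X => P (p.2, p.1) * Real.log (P (p.2, p.1) / (Q p.1 * Q p.2)))
        (fun p : X × X => P p * Real.log (P p / (Q p.1 * Q p.2)))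
        (fun p => show P (p.2, p.1) * Real.log (P (p.2, p.1) / (Q p.1 * Q p.2))
            = P (p.2, p.1) * Real.log (P (p.2, p.1) / (Q p.2 * Q p.1)) from by
          rw [mul_comm (Q p.2) (Q p.1)])
    calc D Pbar ≤ _ := step
      _ = ((∑ p : X × X, P p * Real.log (P p / (Q p.1 * Q p.2))) +
          ∑ p : X × X, P (p.2, p.1) * Real.log (P (p.2, p.1) / (Q p.1 * Q p.2))) / 2 := by
          rw [← Finset.sum_add_distrib, Finset.sum_div]
      _ = (D P + D P) / 2 := by rw [hre2]
      _ = D P := by ring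
end

section
/- If the probability distribution P on 𝒳×𝒳 is symmetric, i.e., P(x,x') = P(x',x) for all x,x' ∈ 𝒳, then max_{s∈[0,1]} Δ_s(P) = Δ_{1/2}(P). -/
/-- Pointwise midpoint concavity of the Chernoff exponent, via Cauchy–Schwarz. -/
lemma chernoff_midpoint {Y : Type*} [Fintype Y] [Nonempty Y] (u v : Y → ℝ)
    (hu : ∀ y, 0 < u y) (hv : ∀ y, 0 < v y) (s : ℝ) :
    (-Real.log (∑ y, u y ^ (1 - s) * v y ^ s) +
      -Real.log (∑ y, u y ^ s * v y ^ (1 - s))) / 2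
      ≤ -Real.log (∑ y, u y ^ ((1:ℝ)/2) * v y ^ ((1:ℝ)/2)) := by
  set A := ∑ y, u y ^ (1 - s) * v y ^ s with hA
  set B := ∑ y, u y ^ s * v y ^ (1 - s) with hB
  set C := ∑ y, u y ^ ((1:ℝ)/2) * v y ^ ((1:ℝ)/2) with hC
  have hApos : 0 < A := Finset.sum_pos (fun y _ => mul_pos (Real.rpow_pos_of_pos (hu y) _)
    (Real.rpow_pos_of_pos (hv y) _)) Finset.univ_nonempty
  have hBpos : 0 < B := Finset.sum_pos (fun y _ => mul_pos (Real.rpow_pos_of_pos (hu y) _)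
    (Real.rpow_pos_of_pos (hv y) _)) Finset.univ_nonempty
  have hCpos : 0 < C := Finset.sum_pos (fun y _ => mul_pos (Real.rpow_pos_of_pos (hu y) _)
    (Real.rpow_pos_of_pos (hv y) _)) Finset.univ_nonempty
  have e1 : ∀ y : Y, (u y ^ ((1-s)/2) * v y ^ (s/2)) * (u y ^ (s/2) * v y ^ ((1-s)/2))
      = u y ^ ((1:ℝ)/2) * v y ^ ((1:ℝ)/2) := by
    intro y
    rw [show (u y ^ ((1-s)/2) * v y ^ (s/2)) * (u y ^ (s/2) * v y ^ ((1-s)/2))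
        = (u y ^ ((1-s)/2) * u y ^ (s/2)) * (v y ^ (s/2) * v y ^ ((1-s)/2)) from by ring,
      ← Real.rpow_add (hu y), ← Real.rpow_add (hv y),
      show (1-s)/2 + s/2 = (1:ℝ)/2 from by ring, show s/2 + (1-s)/2 = (1:ℝ)/2 from by ring]
  have e2 : ∀ y : Y, (u y ^ ((1-s)/2) * v y ^ (s/2)) ^ 2 = u y ^ (1-s) * v y ^ s := by
    intro y
    rw [mul_pow, ← Real.rpow_natCast (u y ^ ((1-s)/2)) 2, ← Real.rpow_natCast (v y ^ (s/2)) 2,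
      ← Real.rpow_mul (hu y).le, ← Real.rpow_mul (hv y).le]
    norm_num
  have e3 : ∀ y : Y, (u y ^ (s/2) * v y ^ ((1-s)/2)) ^ 2 = u y ^ s * v y ^ (1-s) := by
    intro y
    rw [mul_pow, ← Real.rpow_natCast (u y ^ (s/2)) 2, ← Real.rpow_natCast (v y ^ ((1-s)/2)) 2,
      ← Real.rpow_mul (hu y).le, ← Real.rpow_mul (hv y).le]
    norm_num
  have hCS : C ^ 2 ≤ A * B := by
    calc C ^ 2
        = (∑ y, (u y ^ ((1-s)/2) * v y ^ (s/2)) * (u y ^ (s/2) * v y ^ ((1-s)/2))) ^ 2 := by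
          rw [hC, Finset.sum_congr rfl fun y _ => e1 y]
      _ ≤ (∑ y, (u y ^ ((1-s)/2) * v y ^ (s/2)) ^ 2)
            * (∑ y, (u y ^ (s/2) * v y ^ ((1-s)/2)) ^ 2) :=
          Finset.sum_mul_sq_le_sq_mul_sq _ _ _
      _ = A * B := by
          rw [Finset.sum_congr rfl fun y _ => e2 y, Finset.sum_congr rfl fun y _ => e3 y]
  have hlog : Real.log (C ^ 2) ≤ Real.log (A * B) := Real.log_le_log (by positivity) hCS
  rw [Real.log_pow, Real.log_mul hApos.ne' hBpos.ne'] at hlog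
  push_cast at hlog
  linarith

/-- If the probability distribution `P` on `𝒳 × 𝒳` is symmetric,
then `max_{s∈[0,1]} Δ_s(P) = Δ_{1/2}(P)`. -/
theorem stmt_4 {X Y : Type*} [Fintype X] [Fintype Y] [Nonempty X] [Nonempty Y]
    (W : X → Y → ℝ) (hWpos : ∀ x y, 0 < W x y) (hWsum : ∀ x, ∑ y, W x y = 1)
    (P : X × X → ℝ) (hPnn : ∀ p, 0 ≤ P p) (hPsum : ∑ p : X × X, P p = 1)
    (hPsymm : ∀ x x' : X, P (x, x') = P (x', x)) :
    let d : ℝ → X → X → ℝ := fun s x x' => -Real.log (∑ y, W x y ^ (1 - s) * W x' y ^ s)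
    let Δ : ℝ → ℝ := fun s => ∑ p : X × X, P p * d s p.1 p.2
    IsGreatest {w | ∃ s ∈ Set.Icc (0 : ℝ) 1, w = Δ s} (Δ (1 / 2)) := by
  intro d Δ
  constructor
  · exact ⟨1/2, by norm_num, rfl⟩
  · rintro w ⟨s, hs, rfl⟩
    have hd : ∀ x x' : X, d (1 - s) x' x = d s x x' := by
      intro x x'
      show -Real.log (∑ y, W x' y ^ (1 - (1 - s)) * W x y ^ (1 - s))
          = -Real.log (∑ y, W x y ^ (1 - s) * W x' y ^ s)
      rw [sub_sub_cancel]
      have : ∀ y : Y, W x' y ^ s * W x y ^ (1 - s) = W x y ^ (1 - s) * W x' y ^ s :=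
        fun y => mul_comm _ _
      rw [Finset.sum_congr rfl fun y _ => this y]
    have hsym : Δ (1 - s) = Δ s := by
      simp only [Δ]
      rw [Fintype.sum_equiv (Equiv.prodComm X X) _
        (fun p : X × X => P (p.2, p.1) * d (1 - s) p.2 p.1) (fun p => by simp)]
      exact Finset.sum_congr rfl fun p _ => by rw [hPsymm, hd]
    have hmid : ∀ p : X × X, (d s p.1 p.2 + d (1 - s) p.1 p.2) / 2 ≤ d (1/2) p.1 p.2 := by
      intro p
      have h := chernoff_midpoint (W p.1) (W p.2) (hWpos p.1) (hWpos p.2) s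
      simp only [d, sub_sub_cancel]
      rw [show (1 : ℝ) - 1/2 = (1:ℝ)/2 from by norm_num]
      exact h
    have key : (Δ s + Δ (1 - s)) / 2 ≤ Δ (1/2) := by
      simp only [Δ]
      rw [← Finset.sum_add_distrib, Finset.sum_div]
      apply Finset.sum_le_sum
      intro p _
      have h2 := mul_le_mul_of_nonneg_left (hmid p) (hPnn p)
      calc (P p * d s p.1 p.2 + P p * d (1 - s) p.1 p.2) / 2
          = P p * ((d s p.1 p.2 + d (1 - s) p.1 p.2) / 2) := by ring
        _ ≤ _ := h2
    rw [hsym] at key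
    linarith
end

section
/- For every R̂ ≥ 0, the infimum of Δ_{1/2}(P) over all probability distributions P on 𝒳×𝒳 satisfying D(P‖Q×Q) ≤ 2R̂ equals sup_{ρ>0} [E_x(ρ,Q) − 2ρR̂]. -/
/-!
Minimising the linear cost `∑ P d` over `P` with `D(P‖w) ≤ B` is a convex program with dual
function `ρ ↦ -ρ log ∑ w e^{-d/ρ} - ρB`. Since
`D(P‖gibbs t) = D(P‖w) + t ∑ P d + log ∑ w e^{-t d}` for the Gibbs tilt
`gibbs t ∝ w e^{-t d}`, Gibbs' inequality gives weak duality, and the tilt at `t = 1/ρ` attains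
the dual value whenever `D(gibbs t‖w) = B`. The map `t ↦ D(gibbs t‖w)` is continuous and vanishes
at `0`, so for `B > 0` either it reaches `B` (intermediate value theorem) or every tilt is feasible
and the duality gap at `ρ` is at most `ρB`. For `B = 0` only `w` is feasible, and the dual values
tend to `∑ w d`, the derivative of `-log ∑ w e^{-t d}` at `0`.

The theorem is the case `w = Q × Q`, `d = d_{1/2}`, `B = 2R̂`, where `Z^{1/ρ} = e^{-d_{1/2}/ρ}`.
-/

open Real Filter Topology Finset InformationTheory

section Duality

variable {α : Type*} [Fintype α] {w : α → ℝ}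

noncomputable def relEntropy (P q : α → ℝ) : ℝ := ∑ a, P a * log (P a / q a)

lemma relEntropy_self (q : α → ℝ) : relEntropy q q = 0 :=
  sum_eq_zero fun a _ => by by_cases h : q a = 0 <;> simp [h]

lemma relEntropy_nonneg {P q : α → ℝ} (hP : P ∈ stdSimplex ℝ α) (hq : ∀ a, 0 < q a)
    (hq1 : ∑ a, q a ≤ 1) : 0 ≤ relEntropy P q := by
  have hpoint : ∀ a, P a * log (P a / q a) = q a * klFun (P a / q a) + (P a - q a) := by
    intro a
    have := (hq a).ne'
    rw [klFun_apply]
    field_simp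
    ring
  have hkl : 0 ≤ ∑ a, q a * klFun (P a / q a) :=
    sum_nonneg fun a _ => mul_nonneg (hq a).le (klFun_nonneg (div_nonneg (hP.1 a) (hq a).le))
  rw [relEntropy, sum_congr rfl fun a _ => hpoint a, sum_add_distrib, sum_sub_distrib, hP.2]
  linarith

noncomputable def partitionFn (w d : α → ℝ) (t : ℝ) : ℝ := ∑ a, w a * exp (-(t * d a))

noncomputable def gibbs (w d : α → ℝ) (t : ℝ) (a : α) : ℝ :=
  w a * exp (-(t * d a)) / partitionFn w d t

lemma partitionFn_zero (w d : α → ℝ) : partitionFn w d 0 = ∑ a, w a := by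
  simp [partitionFn]

lemma continuous_partitionFn (w d : α → ℝ) : Continuous (partitionFn w d) := by
  unfold partitionFn
  fun_prop

lemma hasDerivAt_log_partitionFn_zero (hw1 : ∑ a, w a = 1) (d : α → ℝ) :
    HasDerivAt (fun t => log (partitionFn w d t)) (-∑ a, w a * d a) 0 := by
  have hZ : HasDerivAt (partitionFn w d) (∑ a, w a * (exp (-(0 * d a)) * -(1 * d a))) 0 :=
    HasDerivAt.fun_sum fun a _ => ((((hasDerivAt_id 0).mul_const (d a)).neg).exp).const_mul (w a)
  have := hZ.log (by simp [partitionFn_zero, hw1])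
  simpa [partitionFn_zero, hw1, sum_neg_distrib] using this

noncomputable def dualObjective (w d : α → ℝ) (B ρ : ℝ) : ℝ :=
  -ρ * log (partitionFn w d ρ⁻¹) - ρ * B

lemma tendsto_dualObjective_zero_atTop (hw1 : ∑ a, w a = 1) (d : α → ℝ) :
    Tendsto (dualObjective w d 0) atTop (𝓝 (∑ a, w a * d a)) := by
  have := ((hasDerivAt_log_partitionFn_zero hw1 d).tendsto_slope_zero_right.comp
    tendsto_inv_atTop_nhdsGT_zero).neg
  unfold dualObjective
  simpa [Function.comp_def, partitionFn_zero, hw1] using this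

section

variable [Nonempty α]

lemma partitionFn_pos (hw : ∀ a, 0 < w a) (d : α → ℝ) (t : ℝ) : 0 < partitionFn w d t :=
  sum_pos (fun a _ => mul_pos (hw a) (exp_pos _)) univ_nonempty

lemma gibbs_pos (hw : ∀ a, 0 < w a) (d : α → ℝ) (t : ℝ) (a : α) : 0 < gibbs w d t a :=
  div_pos (mul_pos (hw a) (exp_pos _)) (partitionFn_pos hw d t)

lemma sum_gibbs (hw : ∀ a, 0 < w a) (d : α → ℝ) (t : ℝ) : ∑ a, gibbs w d t a = 1 := by
  simp only [gibbs, ← sum_div]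
  exact div_self (partitionFn_pos hw d t).ne'

lemma gibbs_mem_stdSimplex (hw : ∀ a, 0 < w a) (d : α → ℝ) (t : ℝ) :
    gibbs w d t ∈ stdSimplex ℝ α :=
  ⟨fun a => (gibbs_pos hw d t a).le, sum_gibbs hw d t⟩

lemma relEntropy_gibbs (hw : ∀ a, 0 < w a) (d : α → ℝ) (t : ℝ) {P : α → ℝ}
    (hP : ∑ a, P a = 1) :
    relEntropy P (gibbs w d t) =
      relEntropy P w + t * ∑ a, P a * d a + log (partitionFn w d t) := by
  have hpoint : ∀ a, P a * log (P a / gibbs w d t a) =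
      P a * log (P a / w a) + t * (P a * d a) + P a * log (partitionFn w d t) := by
    intro a
    rcases eq_or_ne (P a) 0 with h | h
    · simp [h]
    have hZ := (partitionFn_pos hw d t).ne'
    have hwa := (hw a).ne'
    rw [gibbs, log_div h (by positivity), log_div (by positivity) hZ, log_mul hwa (exp_pos _).ne',
      log_exp, log_div h hwa]
    ring
  rw [relEntropy, relEntropy, sum_congr rfl fun a _ => hpoint a, sum_add_distrib,
    sum_add_distrib, ← mul_sum, ← sum_mul, hP, one_mul]

lemma neg_log_partitionFn_le (hw : ∀ a, 0 < w a) (d : α → ℝ) (t : ℝ) {P : α → ℝ}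
    (hP : P ∈ stdSimplex ℝ α) :
    -log (partitionFn w d t) ≤ relEntropy P w + t * ∑ a, P a * d a := by
  have := relEntropy_nonneg hP (gibbs_pos hw d t) (sum_gibbs hw d t).le
  rw [relEntropy_gibbs hw d t hP.2] at this
  linarith

lemma relEntropy_gibbs_left (hw : ∀ a, 0 < w a) (d : α → ℝ) (t : ℝ) :
    relEntropy (gibbs w d t) w =
      -(t * ∑ a, gibbs w d t a * d a) - log (partitionFn w d t) := by
  have := relEntropy_gibbs hw d t (sum_gibbs hw d t)
  rw [relEntropy_self] at this
  linarith

lemma continuous_relEntropy_gibbs_left (hw : ∀ a, 0 < w a) (d : α → ℝ) :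
    Continuous fun t => relEntropy (gibbs w d t) w := by
  have hZ := continuous_partitionFn w d
  have hZ0 : ∀ t, partitionFn w d t ≠ 0 := fun t => (partitionFn_pos hw d t).ne'
  have hgibbs : ∀ a, Continuous fun t => gibbs w d t a := fun a =>
    Continuous.div (by fun_prop) hZ hZ0
  simp only [relEntropy_gibbs_left hw d]
  exact ((continuous_id.mul (continuous_finsetSum _ fun a _ =>
    (hgibbs a).mul continuous_const)).neg).sub (hZ.log hZ0)

lemma relEntropy_gibbs_zero_left (hw : ∀ a, 0 < w a) (hw1 : ∑ a, w a = 1) (d : α → ℝ) :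
    relEntropy (gibbs w d 0) w = 0 := by
  simp [relEntropy_gibbs_left hw, partitionFn_zero, hw1]

lemma dualObjective_le (hw : ∀ a, 0 < w a) (d : α → ℝ) {B ρ : ℝ} (hρ : 0 < ρ)
    {P : α → ℝ} (hP : P ∈ stdSimplex ℝ α) (hPB : relEntropy P w ≤ B) :
    dualObjective w d B ρ ≤ ∑ a, P a * d a := by
  have h := mul_le_mul_of_nonneg_left (neg_log_partitionFn_le hw d ρ⁻¹ hP) hρ.le
  have h' := mul_le_mul_of_nonneg_left hPB hρ.le
  rw [mul_add, ← mul_assoc, mul_inv_cancel₀ hρ.ne', one_mul] at h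
  rw [dualObjective]
  linarith

lemma sum_gibbs_mul_eq_dualObjective (hw : ∀ a, 0 < w a) (d : α → ℝ) {ρ : ℝ} (hρ : 0 < ρ) :
    ∑ a, gibbs w d ρ⁻¹ a * d a = dualObjective w d (relEntropy (gibbs w d ρ⁻¹) w) ρ := by
  rw [dualObjective, relEntropy_gibbs_left hw]
  field_simp
  ring

lemma exists_sum_mul_le_dualObjective_add (hw : ∀ a, 0 < w a) (hw1 : ∑ a, w a = 1)
    (d : α → ℝ) {B ε : ℝ} (hB : 0 ≤ B) (hε : 0 < ε) :
    ∃ P ∈ stdSimplex ℝ α, relEntropy P w ≤ B ∧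
      ∃ ρ > 0, ∑ a, P a * d a ≤ dualObjective w d B ρ + ε := by
  have hw_mem : w ∈ stdSimplex ℝ α := ⟨fun a => (hw a).le, hw1⟩
  rcases hB.eq_or_lt with rfl | hB
  · obtain ⟨ρ, hlt, hρ⟩ := ((tendsto_dualObjective_zero_atTop hw1 d).eventually_const_lt
      (sub_lt_self _ hε) |>.and (eventually_gt_atTop 0)).exists
    exact ⟨w, hw_mem, (relEntropy_self w).le, ρ, hρ, by linarith⟩
  set k := fun t => relEntropy (gibbs w d t) w
  have hk_nonneg : ∀ t, 0 ≤ k t := fun t =>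
    relEntropy_nonneg (gibbs_mem_stdSimplex hw d t) hw hw1.le
  set ρ := ε / B
  have hρ : 0 < ρ := div_pos hε hB
  by_cases hkρ : k ρ⁻¹ ≤ B
  · -- duality gap `ρ (B - k) ≤ ρ B = ε`
    refine ⟨gibbs w d ρ⁻¹, gibbs_mem_stdSimplex hw d _, hkρ, ρ, hρ, ?_⟩
    have hρB : ρ * B = ε := div_mul_cancel₀ ε hB.ne'
    have := mul_nonneg hρ.le (hk_nonneg ρ⁻¹)
    rw [sum_gibbs_mul_eq_dualObjective hw d hρ, dualObjective, dualObjective]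
    linarith
  · obtain ⟨t, ht, hkt⟩ : ∃ t ∈ Set.Icc 0 ρ⁻¹, k t = B :=
      intermediate_value_Icc (inv_pos.2 hρ).le
        (continuous_relEntropy_gibbs_left hw d).continuousOn
        ⟨(relEntropy_gibbs_zero_left hw hw1 d).trans_le hB.le, (not_le.1 hkρ).le⟩
    have ht0 : 0 < t := ht.1.lt_of_ne fun h => by
      rw [← h, show k 0 = 0 from relEntropy_gibbs_zero_left hw hw1 d] at hkt
      exact hB.ne hkt
    refine ⟨gibbs w d t, gibbs_mem_stdSimplex hw d t, hkt.le, t⁻¹, inv_pos.2 ht0, ?_⟩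
    have := sum_gibbs_mul_eq_dualObjective hw d (inv_pos.2 ht0)
    rw [inv_inv] at this
    rw [this, show relEntropy (gibbs w d t) w = B from hkt]
    exact le_add_of_nonneg_right hε.le

end

theorem sInf_relEntropy_le_eq_sSup_dualObjective (hw : ∀ a, 0 < w a) (hw1 : ∑ a, w a = 1)
    (d : α → ℝ) {B : ℝ} (hB : 0 ≤ B) :
    sInf {v | ∃ P ∈ stdSimplex ℝ α, relEntropy P w ≤ B ∧ v = ∑ a, P a * d a} =
      sSup {v | ∃ ρ, 0 < ρ ∧ v = dualObjective w d B ρ} := by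
  have : Nonempty α := by
    by_contra h
    simp [not_nonempty_iff.1 h] at hw1
  set primal := {v | ∃ P ∈ stdSimplex ℝ α, relEntropy P w ≤ B ∧ v = ∑ a, P a * d a}
  set dual := {v | ∃ ρ, 0 < ρ ∧ v = dualObjective w d B ρ}
  have weak : ∀ u ∈ dual, ∀ v ∈ primal, u ≤ v := by
    rintro _ ⟨ρ, hρ, rfl⟩ _ ⟨P, hP, hPB, rfl⟩
    exact dualObjective_le hw d hρ hP hPB
  have hw_mem : ∑ a, w a * d a ∈ primal :=
    ⟨w, ⟨fun a => (hw a).le, hw1⟩, (relEntropy_self w).trans_le hB, rfl⟩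
  have h1_mem : dualObjective w d B 1 ∈ dual := ⟨1, one_pos, rfl⟩
  refine le_antisymm (le_of_forall_pos_le_add fun ε hε => ?_)
    (csSup_le ⟨_, h1_mem⟩ fun u hu => le_csInf ⟨_, hw_mem⟩ (weak u hu))
  obtain ⟨P, hP, hPB, ρ, hρ, hle⟩ := exists_sum_mul_le_dualObjective_add hw hw1 d hB hε
  calc sInf primal ≤ ∑ a, P a * d a := csInf_le ⟨_, weak _ h1_mem⟩ ⟨P, hP, hPB, rfl⟩
    _ ≤ dualObjective w d B ρ + ε := hle
    _ ≤ sSup dual + ε := by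
      gcongr
      exact le_csSup ⟨_, fun u hu => weak u hu _ hw_mem⟩ ⟨ρ, hρ, rfl⟩

end Duality

theorem stmt_6_general {X Y : Type*} [Fintype X] [Fintype Y] [Nonempty Y]
    (W : X → Y → ℝ) (hWpos : ∀ x y, 0 < W x y)
    (Q : X → ℝ) (hQpos : ∀ x, 0 < Q x) (hQsum : ∑ x, Q x = 1)
    (Rh : ℝ) (hRh : 0 ≤ Rh) :
    let Z : X → X → ℝ := fun x x' => ∑ y, Real.sqrt (W x y * W x' y)
    let Δhalf : (X × X → ℝ) → ℝ := fun P => ∑ p : X × X, P p * (-Real.log (Z p.1 p.2))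
    let D : (X × X → ℝ) → ℝ := fun P => ∑ p : X × X, P p * Real.log (P p / (Q p.1 * Q p.2))
    let Ex : ℝ → ℝ := fun ρ => -ρ * Real.log (∑ p : X × X, Q p.1 * Q p.2 * Z p.1 p.2 ^ (1 / ρ))
    sInf {v | ∃ P : X × X → ℝ, ((∀ p, 0 ≤ P p) ∧ ∑ p : X × X, P p = 1) ∧
        D P ≤ 2 * Rh ∧ v = Δhalf P} =
      sSup {v | ∃ ρ : ℝ, 0 < ρ ∧ v = Ex ρ - 2 * ρ * Rh} := by
  intro Z Δhalf D Ex
  have hZ : ∀ x x', 0 < Z x x' := fun x x' =>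
    sum_pos (fun y _ => sqrt_pos.2 (mul_pos (hWpos x y) (hWpos x' y))) univ_nonempty
  have hQQ : ∑ p : X × X, Q p.1 * Q p.2 = 1 := by
    rw [Fintype.sum_prod_type]
    simp [← mul_sum, hQsum]
  have hEx : ∀ ρ, Ex ρ - 2 * ρ * Rh =
      dualObjective (fun p : X × X => Q p.1 * Q p.2) (fun p => -log (Z p.1 p.2)) (2 * Rh) ρ := by
    intro ρ
    simp only [Ex, dualObjective, partitionFn, rpow_def_of_pos (hZ _ _), mul_neg, neg_neg,
      one_div, mul_comm (log _) ρ⁻¹]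
    ring
  simp only [hEx]
  exact sInf_relEntropy_le_eq_sSup_dualObjective
    (fun p : X × X => mul_pos (hQpos p.1) (hQpos p.2)) hQQ _ (by positivity)

/-- For every `R̂ ≥ 0`, the infimum of `Δ_{1/2}(P)` over probability
distributions `P` on `𝒳 × 𝒳` with `D(P‖Q×Q) ≤ 2R̂` equals
`sup_{ρ>0} [E_x(ρ,Q) − 2ρR̂]`. -/
theorem stmt_6 {X Y : Type*} [Fintype X] [Fintype Y] [Nonempty X] [Nonempty Y]
    (W : X → Y → ℝ) (hWpos : ∀ x y, 0 < W x y) (hWsum : ∀ x, ∑ y, W x y = 1)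
    (Q : X → ℝ) (hQpos : ∀ x, 0 < Q x) (hQsum : ∑ x, Q x = 1)
    (Rh : ℝ) (hRh : 0 ≤ Rh) :
    let Z : X → X → ℝ := fun x x' => ∑ y, Real.sqrt (W x y * W x' y)
    let Δhalf : (X × X → ℝ) → ℝ := fun P => ∑ p : X × X, P p * (-Real.log (Z p.1 p.2))
    let D : (X × X → ℝ) → ℝ := fun P => ∑ p : X × X, P p * Real.log (P p / (Q p.1 * Q p.2))
    let Ex : ℝ → ℝ := fun ρ => -ρ * Real.log (∑ p : X × X, Q p.1 * Q p.2 * Z p.1 p.2 ^ (1 / ρ))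
    sInf {v | ∃ P : X × X → ℝ, ((∀ p, 0 ≤ P p) ∧ ∑ p : X × X, P p = 1) ∧
        D P ≤ 2 * Rh ∧ v = Δhalf P} =
      sSup {v | ∃ ρ : ℝ, 0 < ρ ∧ v = Ex ρ - 2 * ρ * Rh} :=
  stmt_6_general W hWpos Q hQpos hQsum Rh hRh
end

section
/- For every r ≥ 0, the infimum of max_{s∈[0,1]} Δ_s(P) over all probability distributions P on 𝒳×𝒳 satisfying D(P‖Q×Q) ≤ r equals the infimum of Δ_{1/2}(P) over the same constraint set. -/
open Finset

-- positivity of the inner sum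
lemma aux_sum_pos {X Y : Type*} [Fintype X] [Fintype Y] [Nonempty Y]
    (W : X → Y → ℝ) (hW : ∀ x y, 0 < W x y) (s : ℝ) (x x' : X) :
    0 < ∑ y, W x y ^ (1 - s) * W x' y ^ s :=
  Finset.sum_pos (fun y _ => mul_pos (Real.rpow_pos_of_pos (hW x y) _)
    (Real.rpow_pos_of_pos (hW x' y) _)) Finset.univ_nonempty

-- the inner sum is ≤ 1 for s ∈ [0,1]
lemma aux_sum_le_one {X Y : Type*} [Fintype X] [Fintype Y] [Nonempty Y]
    (W : X → Y → ℝ) (hW : ∀ x y, 0 < W x y) (hWsum : ∀ x, ∑ y, W x y = 1)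
    {s : ℝ} (hs : s ∈ Set.Icc (0:ℝ) 1) (x x' : X) :
    ∑ y, W x y ^ (1 - s) * W x' y ^ s ≤ 1 := by
  have h : ∀ y, W x y ^ (1 - s) * W x' y ^ s ≤ (1 - s) * W x y + s * W x' y := fun y =>
    Real.geom_mean_le_arith_mean2_weighted (by linarith [hs.2]) hs.1
      (hW x y).le (hW x' y).le (by ring)
  calc ∑ y, W x y ^ (1 - s) * W x' y ^ s ≤ ∑ y, ((1 - s) * W x y + s * W x' y) :=
        Finset.sum_le_sum fun y _ => h y
    _ = (1 - s) * (∑ y, W x y) + s * (∑ y, W x' y) := by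
        rw [Finset.sum_add_distrib, Finset.mul_sum, Finset.mul_sum]
    _ = 1 := by rw [hWsum, hWsum]; ring

-- Cauchy–Schwarz key inequality
lemma aux_cs {X Y : Type*} [Fintype X] [Fintype Y] [Nonempty Y]
    (W : X → Y → ℝ) (hW : ∀ x y, 0 < W x y) (s : ℝ) (x x' : X) :
    (∑ y, W x y ^ (1/2 : ℝ) * W x' y ^ (1/2 : ℝ)) ^ 2 ≤
      (∑ y, W x y ^ (1 - s) * W x' y ^ s) * (∑ y, W x' y ^ (1 - s) * W x y ^ s) := by
  have key := Finset.sum_mul_sq_le_sq_mul_sq Finset.univ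
    (fun y => W x y ^ ((1 - s)/2) * W x' y ^ (s/2))
    (fun y => W x y ^ (s/2) * W x' y ^ ((1-s)/2))
  have h1 : ∀ y, (W x y ^ ((1 - s)/2) * W x' y ^ (s/2)) *
      (W x y ^ (s/2) * W x' y ^ ((1-s)/2)) = W x y ^ (1/2 : ℝ) * W x' y ^ (1/2 : ℝ) := by
    intro y
    rw [mul_mul_mul_comm, ← Real.rpow_add (hW x y), ← Real.rpow_add (hW x' y)]
    have e1 : (1 - s)/2 + s/2 = (1/2 : ℝ) := by ring
    have e2 : s/2 + (1 - s)/2 = (1/2 : ℝ) := by ring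
    rw [e1, e2]
  have h2 : ∀ (t : ℝ), 0 < t → ∀ c : ℝ, (t ^ c) ^ 2 = t ^ (c * 2) := by
    intro t ht c
    rw [Real.rpow_mul ht.le, Real.rpow_two]
  have h3 : ∀ y, (W x y ^ ((1 - s)/2) * W x' y ^ (s/2)) ^ 2
      = W x y ^ (1 - s) * W x' y ^ s := by
    intro y; rw [mul_pow, h2 _ (hW x y), h2 _ (hW x' y)]
    have e1 : (1 - s)/2 * 2 = (1 - s) := by ring
    have e2 : s/2 * 2 = s := by ring
    rw [e1, e2]
  have h4 : ∀ y, (W x y ^ (s/2) * W x' y ^ ((1-s)/2)) ^ 2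
      = W x' y ^ (1 - s) * W x y ^ s := by
    intro y; rw [mul_pow, h2 _ (hW x y), h2 _ (hW x' y)]
    have e1 : (1 - s)/2 * 2 = (1 - s) := by ring
    have e2 : s/2 * 2 = s := by ring
    rw [e1, e2, mul_comm]
  calc (∑ y, W x y ^ (1/2 : ℝ) * W x' y ^ (1/2 : ℝ)) ^ 2
      = (∑ y, (W x y ^ ((1 - s)/2) * W x' y ^ (s/2)) *
          (W x y ^ (s/2) * W x' y ^ ((1-s)/2))) ^ 2 := by
        congr 1; exact Finset.sum_congr rfl fun y _ => (h1 y).symm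
    _ ≤ (∑ y, (W x y ^ ((1 - s)/2) * W x' y ^ (s/2)) ^ 2) *
        (∑ y, (W x y ^ (s/2) * W x' y ^ ((1-s)/2)) ^ 2) := key
    _ = _ := by
        congr 1
        · exact Finset.sum_congr rfl fun y _ => h3 y
        · exact Finset.sum_congr rfl fun y _ => h4 y

-- key pointwise inequality: d_s(x,x') + d_s(x',x) ≤ 2 d_{1/2}(x,x')
lemma aux_dkey {X Y : Type*} [Fintype X] [Fintype Y] [Nonempty Y]
    (W : X → Y → ℝ) (hW : ∀ x y, 0 < W x y) (s : ℝ) (x x' : X) :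
    -Real.log (∑ y, W x y ^ (1 - s) * W x' y ^ s) +
      -Real.log (∑ y, W x' y ^ (1 - s) * W x y ^ s) ≤
    2 * (-Real.log (∑ y, W x y ^ (1 - (1/2:ℝ)) * W x' y ^ ((1/2:ℝ)))) := by
  have h2 : (1 : ℝ) - 1/2 = 1/2 := by norm_num
  rw [h2]
  have hA := aux_sum_pos W hW s x x'
  have hB := aux_sum_pos W hW s x' x
  have hC := aux_sum_pos W hW (1/2 : ℝ) x x'
  rw [h2] at hC
  have hCS := aux_cs W hW s x x'
  have hlog := Real.log_le_log (by positivity) hCS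
  rw [Real.log_pow, Real.log_mul hA.ne' hB.ne'] at hlog
  push_cast at hlog
  linarith

-- sum lower bound: ∃ uniform positive lower bound m with -log m an upper bound for d
lemma aux_m {X Y : Type*} [Fintype X] [Fintype Y] [Nonempty X] [Nonempty Y]
    (W : X → Y → ℝ) (hW : ∀ x y, 0 < W x y) :
    ∃ m : ℝ, 0 < m ∧ ∀ {s : ℝ}, s ∈ Set.Icc (0:ℝ) 1 → ∀ x x',
      m ≤ ∑ y, W x y ^ (1 - s) * W x' y ^ s := by
  obtain ⟨⟨x₀, y₀⟩, -, hmin⟩ := Finset.exists_min_image Finset.univ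
    (fun p : X × Y => W p.1 p.2) (Finset.univ_nonempty)
  set m := W x₀ y₀ with hm
  refine ⟨m, hW x₀ y₀, ?_⟩
  intro s hs x x'
  have hmle : ∀ x y, m ≤ W x y := fun x y => hmin (x, y) (Finset.mem_univ _)
  have hmpos : 0 < m := hW x₀ y₀
  have hyy : ∃ y : Y, True := ⟨Classical.arbitrary Y, trivial⟩
  obtain ⟨y₁, -⟩ := hyy
  have h1 : m ^ (1 - s) * m ^ s ≤ W x y₁ ^ (1 - s) * W x' y₁ ^ s := by
    apply mul_le_mul
    · exact Real.rpow_le_rpow hmpos.le (hmle x y₁) (by linarith [hs.2])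
    · exact Real.rpow_le_rpow hmpos.le (hmle x' y₁) hs.1
    · exact (Real.rpow_pos_of_pos hmpos s).le
    · exact (Real.rpow_pos_of_pos (hW x y₁) _).le
  have h2 : m ^ (1 - s) * m ^ s = m := by
    rw [← Real.rpow_add hmpos]
    norm_num
  calc m = m ^ (1 - s) * m ^ s := h2.symm
    _ ≤ W x y₁ ^ (1 - s) * W x' y₁ ^ s := h1
    _ ≤ ∑ y, W x y ^ (1 - s) * W x' y ^ s := by
        apply Finset.single_le_sum (f := fun y => W x y ^ (1 - s) * W x' y ^ s)
          (fun y _ => (mul_pos (Real.rpow_pos_of_pos (hW x y) _)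
            (Real.rpow_pos_of_pos (hW x' y) _)).le) (Finset.mem_univ y₁)

-- swap reindexing
lemma aux_swap {X : Type*} [Fintype X] (f : X × X → ℝ) :
    ∑ p : X × X, f (p.2, p.1) = ∑ p : X × X, f p :=
  Fintype.sum_equiv (Equiv.prodComm X X) _ f (fun _ => rfl)

-- pointwise midpoint convexity of t ↦ t log (t/c)
lemma aux_ptwise {a b c : ℝ} (ha : 0 ≤ a) (hb : 0 ≤ b) (hc : 0 < c) :
    ((a + b)/2) * Real.log (((a + b)/2)/c) ≤
      (a * Real.log (a/c) + b * Real.log (b/c))/2 := by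
  have hlog : ∀ t : ℝ, 0 ≤ t → t * Real.log (t/c) = t * Real.log t - t * Real.log c := by
    intro t ht
    rcases eq_or_lt_of_le ht with h | h
    · simp [← h]
    · rw [Real.log_div h.ne' hc.ne']; ring
  rw [hlog _ ha, hlog _ hb, hlog _ (by positivity)]
  have hconv := Real.convexOn_mul_log.2 (Set.mem_Ici.mpr ha) (Set.mem_Ici.mpr hb)
    (by norm_num : (0:ℝ) ≤ 1/2) (by norm_num : (0:ℝ) ≤ 1/2) (by norm_num)
  simp only [smul_eq_mul] at hconv
  have he : (1/2 : ℝ) * a + (1/2 : ℝ) * b = (a + b)/2 := by ring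
  rw [he] at hconv
  have hlin : ((a + b)/2) * Real.log c = (a * Real.log c + b * Real.log c)/2 := by ring
  linarith

/-- For every `r ≥ 0`, the infimum of `max_{s∈[0,1]} Δ_s(P)` over all
probability distributions `P` on `𝒳 × 𝒳` with `D(P‖Q×Q) ≤ r` equals the infimum of
`Δ_{1/2}(P)` over the same constraint set. -/
theorem stmt_7 {X Y : Type*} [Fintype X] [Fintype Y] [Nonempty X] [Nonempty Y]
    (W : X → Y → ℝ) (hWpos : ∀ x y, 0 < W x y) (hWsum : ∀ x, ∑ y, W x y = 1)
    (Q : X → ℝ) (hQpos : ∀ x, 0 < Q x) (hQsum : ∑ x, Q x = 1)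
    (r : ℝ) (hr : 0 ≤ r) :
    let d : ℝ → X → X → ℝ := fun s x x' => -Real.log (∑ y, W x y ^ (1 - s) * W x' y ^ s)
    let Δs : ℝ → (X × X → ℝ) → ℝ := fun s P => ∑ p : X × X, P p * d s p.1 p.2
    let D : (X × X → ℝ) → ℝ := fun P => ∑ p : X × X, P p * Real.log (P p / (Q p.1 * Q p.2))
    let Prob : Set (X × X → ℝ) := {P | (∀ p, 0 ≤ P p) ∧ ∑ p : X × X, P p = 1}
    sInf {v | ∃ P ∈ Prob, D P ≤ r ∧
        v = sSup {w | ∃ s ∈ Set.Icc (0 : ℝ) 1, w = Δs s P}} =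
      sInf {v | ∃ P ∈ Prob, D P ≤ r ∧ v = Δs (1 / 2) P} := by
  intro d Δs D Prob
  classical
  have hdeq : ∀ s (x x' : X), d s x x' = -Real.log (∑ y, W x y ^ (1 - s) * W x' y ^ s) :=
    fun _ _ _ => rfl
  have hΔeq : ∀ s (P : X × X → ℝ), Δs s P = ∑ p : X × X, P p * d s p.1 p.2 := fun _ _ => rfl
  have hDeq : ∀ P : X × X → ℝ, D P = ∑ p : X × X, P p * Real.log (P p / (Q p.1 * Q p.2)) :=
    fun _ => rfl
  have hProb : ∀ P : X × X → ℝ, P ∈ Prob ↔ ((∀ p, 0 ≤ P p) ∧ ∑ p : X × X, P p = 1) :=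
    fun _ => Iff.rfl
  have hhalf : (1/2 : ℝ) ∈ Set.Icc (0:ℝ) 1 := by constructor <;> norm_num
  -- nonnegativity of d on [0,1]
  have hd0 : ∀ {s : ℝ}, s ∈ Set.Icc (0:ℝ) 1 → ∀ x x', 0 ≤ d s x x' := by
    intro s hs x x'
    rw [hdeq]
    have h1 := aux_sum_le_one W hWpos hWsum hs x x'
    have h2 := aux_sum_pos W hWpos s x x'
    simpa using Real.log_nonpos h2.le h1
  -- uniform upper bound B on d over [0,1]
  obtain ⟨m, hmpos, hmle⟩ := aux_m W hWpos
  set B : ℝ := -Real.log m with hB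
  have hdB : ∀ {s : ℝ}, s ∈ Set.Icc (0:ℝ) 1 → ∀ x x', d s x x' ≤ B := by
    intro s hs x x'
    rw [hdeq, hB]
    exact neg_le_neg (Real.log_le_log hmpos (hmle hs x x'))
  -- symmetry of d at 1/2
  have hdsymm : ∀ x x', d (1/2 : ℝ) x x' = d (1/2 : ℝ) x' x := by
    intro x x'
    rw [hdeq, hdeq]
    have h2 : (1 : ℝ) - 1/2 = 1/2 := by norm_num
    rw [h2]
    congr 1
    congr 1
    exact Finset.sum_congr rfl fun y _ => mul_comm _ _
  -- key pointwise inequality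
  have hkey : ∀ (s : ℝ) (x x' : X), d s x x' + d s x' x ≤ 2 * d (1/2 : ℝ) x x' := by
    intro s x x'
    rw [hdeq, hdeq, hdeq]
    exact aux_dkey W hWpos s x x'
  -- facts for P ∈ Prob
  have hΔle : ∀ P : X × X → ℝ, P ∈ Prob → ∀ {s : ℝ}, s ∈ Set.Icc (0:ℝ) 1 → Δs s P ≤ B := by
    intro P hP s hs
    rw [hΔeq]
    calc ∑ p : X × X, P p * d s p.1 p.2 ≤ ∑ p : X × X, P p * B :=
          Finset.sum_le_sum fun p _ => mul_le_mul_of_nonneg_left (hdB hs _ _) (hP.1 p)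
      _ = B := by rw [← Finset.sum_mul, hP.2, one_mul]
  have hΔ0 : ∀ P : X × X → ℝ, P ∈ Prob → 0 ≤ Δs (1/2 : ℝ) P := by
    intro P hP
    rw [hΔeq]
    exact Finset.sum_nonneg fun p _ => mul_nonneg (hP.1 p) (hd0 hhalf _ _)
  have hbddS : ∀ P : X × X → ℝ, P ∈ Prob →
      BddAbove {w | ∃ s ∈ Set.Icc (0:ℝ) 1, w = Δs s P} := by
    intro P hP
    exact ⟨B, by rintro w ⟨s, hs, rfl⟩; exact hΔle P hP hs⟩
  have hmemS : ∀ P : X × X → ℝ, Δs (1/2 : ℝ) P ∈ {w | ∃ s ∈ Set.Icc (0:ℝ) 1, w = Δs s P} := by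
    intro P; exact ⟨1/2, hhalf, rfl⟩
  -- symmetrization
  have hsym : ∀ P : X × X → ℝ, P ∈ Prob → D P ≤ r →
      ∃ Ps ∈ Prob, D Ps ≤ r ∧ Δs (1/2 : ℝ) Ps = Δs (1/2 : ℝ) P ∧
        sSup {w | ∃ s ∈ Set.Icc (0:ℝ) 1, w = Δs s Ps} = Δs (1/2 : ℝ) Ps := by
    intro P hP hDP
    set Ps : X × X → ℝ := fun p => (P p + P (p.2, p.1))/2 with hPs
    have hPsswap : ∀ p : X × X, Ps (p.2, p.1) = Ps p := by
      intro p
      simp only [hPs]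
      ring
    have hPsnn : ∀ p, 0 ≤ Ps p := fun p => by
      have := hP.1 p; have := hP.1 (p.2, p.1)
      simp only [hPs]; linarith
    have hsum2 : ∑ p : X × X, P (p.2, p.1) = 1 := by
      rw [aux_swap P]; exact hP.2
    have hPsProb : Ps ∈ Prob := by
      rw [hProb]
      refine ⟨hPsnn, ?_⟩
      simp only [hPs]
      rw [← Finset.sum_div, Finset.sum_add_distrib, hP.2, hsum2]
      norm_num
    -- D Ps ≤ D P
    have hDPs : D Ps ≤ D P := by
      rw [hDeq, hDeq]
      have step1 : ∑ p : X × X, Ps p * Real.log (Ps p / (Q p.1 * Q p.2)) ≤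
          ∑ p : X × X, (P p * Real.log (P p / (Q p.1 * Q p.2)) +
            P (p.2, p.1) * Real.log (P (p.2, p.1) / (Q p.1 * Q p.2)))/2 := by
        apply Finset.sum_le_sum
        intro p _
        have := aux_ptwise (hP.1 p) (hP.1 (p.2, p.1)) (mul_pos (hQpos p.1) (hQpos p.2))
        simpa [hPs] using this
      have step2 : ∑ p : X × X, P (p.2, p.1) * Real.log (P (p.2, p.1) / (Q p.1 * Q p.2)) =
          ∑ p : X × X, P p * Real.log (P p / (Q p.1 * Q p.2)) := by
        have := aux_swap (fun p : X × X => P p * Real.log (P p / (Q p.2 * Q p.1)))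
        simpa [mul_comm] using this
      calc ∑ p : X × X, Ps p * Real.log (Ps p / (Q p.1 * Q p.2))
          ≤ ∑ p : X × X, (P p * Real.log (P p / (Q p.1 * Q p.2)) +
            P (p.2, p.1) * Real.log (P (p.2, p.1) / (Q p.1 * Q p.2)))/2 := step1
        _ = ((∑ p : X × X, P p * Real.log (P p / (Q p.1 * Q p.2))) +
            ∑ p : X × X, P (p.2, p.1) * Real.log (P (p.2, p.1) / (Q p.1 * Q p.2)))/2 := by
            rw [← Finset.sum_div, Finset.sum_add_distrib]
        _ = ∑ p : X × X, P p * Real.log (P p / (Q p.1 * Q p.2)) := by rw [step2]; ring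
    -- Δ at 1/2 unchanged
    have hswapd : ∀ (s' : ℝ), ∑ p : X × X, P (p.2, p.1) * d s' p.1 p.2 =
        ∑ p : X × X, P p * d s' p.2 p.1 := by
      intro s'
      exact aux_swap (fun p : X × X => P p * d s' p.2 p.1)
    have hΔhalf : Δs (1/2 : ℝ) Ps = Δs (1/2 : ℝ) P := by
      rw [hΔeq, hΔeq]
      have : ∀ p : X × X, Ps p * d (1/2 : ℝ) p.1 p.2 =
          (P p * d (1/2:ℝ) p.1 p.2 + P (p.2, p.1) * d (1/2:ℝ) p.1 p.2)/2 := by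
        intro p; simp only [hPs]; ring
      rw [Finset.sum_congr rfl fun p _ => this p, ← Finset.sum_div, Finset.sum_add_distrib,
        hswapd]
      have : ∑ p : X × X, P p * d (1/2:ℝ) p.2 p.1 = ∑ p : X × X, P p * d (1/2:ℝ) p.1 p.2 :=
        Finset.sum_congr rfl fun p _ => by rw [hdsymm]
      rw [this]; ring
    -- sSup over s equals value at 1/2
    have hub : ∀ w ∈ {w | ∃ s ∈ Set.Icc (0:ℝ) 1, w = Δs s Ps}, w ≤ Δs (1/2:ℝ) Ps := by
      rintro w ⟨s', hs', rfl⟩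
      have e1 : ∑ p : X × X, Ps p * d s' p.2 p.1 = Δs s' Ps := by
        rw [hΔeq]
        calc ∑ p : X × X, Ps p * d s' p.2 p.1
            = ∑ p : X × X, Ps (p.2, p.1) * d s' p.1 p.2 :=
              (aux_swap (fun p : X × X => Ps p * d s' p.2 p.1)).symm
          _ = ∑ p : X × X, Ps p * d s' p.1 p.2 :=
              Finset.sum_congr rfl fun p _ => by rw [hPsswap]
      have e2 : Δs s' Ps + Δs s' Ps ≤ 2 * Δs (1/2:ℝ) Ps := by
        nth_rewrite 2 [← e1]
        rw [hΔeq s' Ps, hΔeq (1/2:ℝ) Ps, ← Finset.sum_add_distrib]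
        have : ∑ p : X × X, 2 * (Ps p * d (1/2:ℝ) p.1 p.2) =
            2 * ∑ p : X × X, Ps p * d (1/2:ℝ) p.1 p.2 := by rw [Finset.mul_sum]
        rw [← this]
        apply Finset.sum_le_sum
        intro p _
        have hk := hkey s' p.1 p.2
        have hnn := hPsnn p
        nlinarith [hk, hnn]
      linarith [e2]
    have hsSup : sSup {w | ∃ s ∈ Set.Icc (0:ℝ) 1, w = Δs s Ps} = Δs (1/2:ℝ) Ps :=
      IsGreatest.csSup_eq ⟨hmemS Ps, hub⟩
    exact ⟨Ps, hPsProb, le_trans hDPs hDP, hΔhalf, hsSup⟩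
  -- the reference distribution Q × Q
  set P₀ : X × X → ℝ := fun p => Q p.1 * Q p.2 with hP₀def
  have hP₀Prob : P₀ ∈ Prob := by
    rw [hProb]
    constructor
    · intro p; exact (mul_pos (hQpos p.1) (hQpos p.2)).le
    · simp only [hP₀def]
      rw [Fintype.sum_prod_type]
      have : ∀ x : X, ∑ x' : X, Q x * Q x' = Q x := by
        intro x; rw [← Finset.mul_sum, hQsum, mul_one]
      rw [Finset.sum_congr rfl fun x _ => this x, hQsum]
  have hDP₀ : D P₀ ≤ r := by
    rw [hDeq]
    have : ∀ p : X × X, P₀ p * Real.log (P₀ p / (Q p.1 * Q p.2)) = 0 := by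
      intro p
      simp only [hP₀def]
      rw [div_self (mul_pos (hQpos p.1) (hQpos p.2)).ne', Real.log_one, mul_zero]
    rw [Finset.sum_congr rfl fun p _ => this p, Finset.sum_const_zero]
    exact hr
  -- bounds and nonemptiness of the two sets
  have hRbdd : BddBelow {v | ∃ P ∈ Prob, D P ≤ r ∧ v = Δs (1/2 : ℝ) P} := by
    refine ⟨0, ?_⟩
    rintro v ⟨P, hP, -, rfl⟩
    exact hΔ0 P hP
  have hLbdd : BddBelow {v | ∃ P ∈ Prob, D P ≤ r ∧
      v = sSup {w | ∃ s ∈ Set.Icc (0:ℝ) 1, w = Δs s P}} := by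
    refine ⟨0, ?_⟩
    rintro v ⟨P, hP, -, rfl⟩
    exact le_trans (hΔ0 P hP) (le_csSup (hbddS P hP) (hmemS P))
  have hRne : {v | ∃ P ∈ Prob, D P ≤ r ∧ v = Δs (1/2 : ℝ) P}.Nonempty :=
    ⟨Δs (1/2 : ℝ) P₀, P₀, hP₀Prob, hDP₀, rfl⟩
  have hLne : {v | ∃ P ∈ Prob, D P ≤ r ∧
      v = sSup {w | ∃ s ∈ Set.Icc (0:ℝ) 1, w = Δs s P}}.Nonempty :=
    ⟨_, P₀, hP₀Prob, hDP₀, rfl⟩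
  apply le_antisymm
  · apply le_csInf hRne
    rintro b ⟨P, hP, hDP, rfl⟩
    obtain ⟨Ps, hPsProb, hDPs, hΔhalf, hsSup⟩ := hsym P hP hDP
    apply csInf_le hLbdd
    exact ⟨Ps, hPsProb, hDPs, by rw [hsSup, hΔhalf]⟩
  · apply le_csInf hLne
    rintro b ⟨P, hP, hDP, rfl⟩
    have h1 : Δs (1/2 : ℝ) P ≤ sSup {w | ∃ s ∈ Set.Icc (0:ℝ) 1, w = Δs s P} :=
      le_csSup (hbddS P hP) (hmemS P)
    have h2 : sInf {v | ∃ P ∈ Prob, D P ≤ r ∧ v = Δs (1/2 : ℝ) P} ≤ Δs (1/2 : ℝ) P :=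
      csInf_le hRbdd ⟨P, hP, hDP, rfl⟩
    linarith
end

section
/- Let R > 0 and suppose ρ* ≥ 1 satisfies E_x(ρ*,Q) = (2ρ*−1)R. Then inf_{R̂∈[0,R)} sup_{ρ>0} (E_x(ρ,Q) − (2ρ−1)R̂)/(R − R̂) = 2ρ* − 1 = E_x(ρ*,Q)/R. -/
open Finset in
private lemma jensen_exp_aux {ι : Type*} [Fintype ι] [Nonempty ι] (w d : ι → ℝ)
    (hw : ∀ i, 0 ≤ w i) (hw1 : ∑ i, w i = 1) :
    ∑ i, w i * d i ≤ Real.log (∑ i, w i * Real.exp (d i)) := by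
  have h := convexOn_exp.map_sum_le (t := Finset.univ) (w := w) (p := d)
    (fun i _ => hw i) hw1 (fun i _ => Set.mem_univ _)
  simp only [smul_eq_mul] at h
  calc ∑ i, w i * d i = Real.log (Real.exp (∑ i, w i * d i)) := (Real.log_exp _).symm
    _ ≤ Real.log (∑ i, w i * Real.exp (d i)) := Real.log_le_log (Real.exp_pos _) h

/-- If `R > 0` and `ρ* ≥ 1` satisfies `E_x(ρ*,Q) = (2ρ*−1)R`, then
`inf_{R̂∈[0,R)} sup_{ρ>0} (E_x(ρ,Q) − (2ρ−1)R̂)/(R − R̂) = 2ρ* − 1 = E_x(ρ*,Q)/R`. -/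
theorem stmt_8 {X Y : Type*} [Fintype X] [Fintype Y] [Nonempty X] [Nonempty Y]
    (W : X → Y → ℝ) (hWpos : ∀ x y, 0 < W x y) (hWsum : ∀ x, ∑ y, W x y = 1)
    (Q : X → ℝ) (hQpos : ∀ x, 0 < Q x) (hQsum : ∑ x, Q x = 1)
    (R ρstar : ℝ) (hR : 0 < R) (hρ : 1 ≤ ρstar)
    (heq : -ρstar * Real.log (∑ p : X × X, Q p.1 * Q p.2 *
        (∑ y, Real.sqrt (W p.1 y * W p.2 y)) ^ (1 / ρstar)) = (2 * ρstar - 1) * R) :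
    let Ex : ℝ → ℝ := fun ρ => -ρ * Real.log (∑ p : X × X, Q p.1 * Q p.2 *
        (∑ y, Real.sqrt (W p.1 y * W p.2 y)) ^ (1 / ρ))
    sInf {v | ∃ Rh : ℝ, 0 ≤ Rh ∧ Rh < R ∧
        v = sSup {w | ∃ ρ : ℝ, 0 < ρ ∧ w = (Ex ρ - (2 * ρ - 1) * Rh) / (R - Rh)}} =
      2 * ρstar - 1 ∧
    2 * ρstar - 1 = Ex ρstar / R := by
  intro Ex
  have hρpos : (0:ℝ) < ρstar := lt_of_lt_of_le one_pos hρ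
  have hρne : ρstar ≠ 0 := ne_of_gt hρpos
  -- basic facts
  have ha : ∀ p : X × X, 0 < Q p.1 * Q p.2 := fun p => mul_pos (hQpos _) (hQpos _)
  have hasum : ∑ p : X × X, Q p.1 * Q p.2 = 1 := by
    rw [Fintype.sum_prod_type]
    simp only [← Finset.mul_sum, hQsum, mul_one]
  have hz : ∀ p : X × X, 0 < ∑ y, Real.sqrt (W p.1 y * W p.2 y) := fun p =>
    Finset.sum_pos (fun y _ => Real.sqrt_pos.mpr (mul_pos (hWpos _ _) (hWpos _ _)))
      Finset.univ_nonempty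
  have hz1 : ∀ p : X × X, (∑ y, Real.sqrt (W p.1 y * W p.2 y)) ≤ 1 := by
    intro p
    have hsq : (∑ y, Real.sqrt (W p.1 y * W p.2 y)) ^ 2 ≤ (∑ y, W p.1 y) * (∑ y, W p.2 y) :=
      Finset.sum_sq_le_sum_mul_sum_of_sq_eq_mul _ (fun y _ => (hWpos _ y).le)
        (fun y _ => (hWpos _ y).le)
        (fun y _ => Real.sq_sqrt (mul_nonneg (hWpos _ y).le (hWpos _ y).le))
    rw [hWsum, hWsum, mul_one] at hsq
    nlinarith [hz p]
  set c : X × X → ℝ := fun p => Real.log (∑ y, Real.sqrt (W p.1 y * W p.2 y)) with hcdef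
  have hc : ∀ p, c p ≤ 0 := fun p => Real.log_nonpos (hz p).le (hz1 p)
  set M : ℝ → ℝ := fun t => ∑ p : X × X, Q p.1 * Q p.2 * Real.exp (c p * t) with hMdef
  have hM : ∀ t, 0 < M t := fun t =>
    Finset.sum_pos (fun p _ => mul_pos (ha p) (Real.exp_pos _)) Finset.univ_nonempty
  have hMne : ∀ t, M t ≠ 0 := fun t => ne_of_gt (hM t)
  have hM0 : M 0 = 1 := by
    simp only [hMdef, mul_zero, Real.exp_zero, mul_one]; exact hasum
  have hEx : ∀ ρ : ℝ, Ex ρ = -ρ * Real.log (M (1 / ρ)) := by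
    intro ρ
    show -ρ * Real.log (∑ p : X × X, Q p.1 * Q p.2 *
        (∑ y, Real.sqrt (W p.1 y * W p.2 y)) ^ (1 / ρ)) = _
    rw [hMdef]
    congr 2
    exact Finset.sum_congr rfl fun p _ => by rw [Real.rpow_def_of_pos (hz p)]
  have hExstar : Ex ρstar = (2 * ρstar - 1) * R := heq
  set K : ℝ := Real.log (M (1 / ρstar)) with hKdef
  have heqM : -ρstar * K = (2 * ρstar - 1) * R := by rw [hKdef, ← hEx]; exact hExstar
  -- tilted weights
  set wt : X × X → ℝ := fun p => Q p.1 * Q p.2 * Real.exp (c p * (1 / ρstar)) / M (1 / ρstar)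
    with hwtdef
  have hwt : ∀ p, 0 ≤ wt p := fun p =>
    div_nonneg (mul_nonneg (ha p).le (Real.exp_pos _).le) (hM _).le
  have hwt1 : ∑ p, wt p = 1 := by
    rw [hwtdef, ← Finset.sum_div]
    exact div_self (hMne _)
  set A : ℝ := ∑ p, wt p * c p with hAdef
  have hA : A ≤ 0 := Finset.sum_nonpos fun p _ => mul_nonpos_of_nonneg_of_nonpos (hwt p) (hc p)
  -- supporting line for log M at t* = 1/ρstar
  have hsupport : ∀ t : ℝ, K + A * (t - 1 / ρstar) ≤ Real.log (M t) := by
    intro t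
    have hj := jensen_exp_aux wt (fun p => c p * (t - 1 / ρstar)) hwt hwt1
    have hL : ∑ p, wt p * (c p * (t - 1 / ρstar)) = A * (t - 1 / ρstar) := by
      rw [hAdef, Finset.sum_mul]
      exact Finset.sum_congr rfl fun p _ => (mul_assoc _ _ _).symm
    have hR2 : ∑ p, wt p * Real.exp (c p * (t - 1 / ρstar)) = M t / M (1 / ρstar) := by
      rw [eq_div_iff (hMne _), Finset.sum_mul]
      refine Finset.sum_congr rfl fun p _ => ?_
      rw [hwtdef]
      simp only
      rw [div_mul_eq_mul_div, div_mul_cancel₀ _ (hMne _), mul_assoc, ← Real.exp_add,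
        show c p * (1 / ρstar) + c p * (t - 1 / ρstar) = c p * t by ring]
    rw [hL, hR2] at hj
    rw [Real.log_div (hMne t) (hMne _)] at hj
    rw [hKdef]
    linarith
  have hA_lb : K ≤ A * (1 / ρstar) := by
    have h0 := hsupport 0
    rw [hM0, Real.log_one] at h0
    linarith
  set Rh : ℝ := (A * (1 / ρstar) - K) / 2 with hRhdef
  have hRh0 : 0 ≤ Rh := by rw [hRhdef]; linarith
  have hRhR : Rh < R := by
    rw [hRhdef]
    have h1 : A * (1 / ρstar) ≤ 0 :=
      mul_nonpos_of_nonpos_of_nonneg hA (by positivity)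
    have h2 : ρstar * (1 / ρstar) = 1 := by field_simp
    nlinarith [mul_pos hρpos hR]
  -- the tangent-line bound for Ex
  have hline : ∀ ρ : ℝ, 0 < ρ → Ex ρ ≤ Ex ρstar + 2 * Rh * (ρ - ρstar) := by
    intro ρ hρp
    have hρne' : ρ ≠ 0 := ne_of_gt hρp
    rw [hEx ρ, hEx ρstar, ← hKdef]
    have hs := hsupport (1 / ρ)
    have h2 : ρ * (K + A * (1 / ρ - 1 / ρstar)) ≤ ρ * Real.log (M (1 / ρ)) :=
      mul_le_mul_of_nonneg_left hs hρp.le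
    have h3 : ρ * (K + A * (1 / ρ - 1 / ρstar)) = ρ * K + A - A * (1 / ρstar) * ρ := by
      field_simp; ring
    have h4 : -ρstar * K + 2 * Rh * (ρ - ρstar) = -(ρ * K + A - A * (1 / ρstar) * ρ) := by
      rw [hRhdef]; field_simp; ring
    rw [h4]
    rw [h3] at h2
    linarith
  -- upper bound Ex ≤ C for boundedness of the inner sets
  set C : ℝ := -∑ p : X × X, Q p.1 * Q p.2 * c p with hCdef
  have hC : ∀ ρ : ℝ, 0 < ρ → Ex ρ ≤ C := by
    intro ρ hρp
    have hρne' : ρ ≠ 0 := ne_of_gt hρp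
    rw [hEx ρ, hCdef]
    have hj := jensen_exp_aux (fun p : X × X => Q p.1 * Q p.2) (fun p => c p * (1 / ρ))
      (fun p => (ha p).le) hasum
    have hL : ∑ p : X × X, Q p.1 * Q p.2 * (c p * (1 / ρ)) =
        (∑ p : X × X, Q p.1 * Q p.2 * c p) * (1 / ρ) := by
      rw [Finset.sum_mul]
      exact Finset.sum_congr rfl fun p _ => (mul_assoc _ _ _).symm
    rw [hL] at hj
    have h2 : ρ * ((∑ p : X × X, Q p.1 * Q p.2 * c p) * (1 / ρ)) ≤ ρ * Real.log (M (1 / ρ)) :=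
      mul_le_mul_of_nonneg_left hj hρp.le
    have h3 : ρ * ((∑ p : X × X, Q p.1 * Q p.2 * c p) * (1 / ρ)) =
        ∑ p : X × X, Q p.1 * Q p.2 * c p := by field_simp
    rw [h3] at h2
    linarith
  -- the value at ρ = ρstar
  have hval : ∀ r : ℝ, 0 ≤ r → r < R →
      (Ex ρstar - (2 * ρstar - 1) * r) / (R - r) = 2 * ρstar - 1 := by
    intro r h0 hrR
    rw [hExstar, div_eq_iff (ne_of_gt (sub_pos.mpr hrR))]
    ring
  have hbdd : ∀ r : ℝ, 0 ≤ r → r < R →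
      BddAbove {w | ∃ ρ : ℝ, 0 < ρ ∧ w = (Ex ρ - (2 * ρ - 1) * r) / (R - r)} := by
    intro r h0 hrR
    refine ⟨(C + r) / (R - r), ?_⟩
    rintro w ⟨ρ, hρp, rfl⟩
    have hden : 0 < R - r := sub_pos.mpr hrR
    have hnum : Ex ρ - (2 * ρ - 1) * r ≤ C + r := by
      nlinarith [hC ρ hρp, mul_nonneg hρp.le h0]
    gcongr
  have hlow : ∀ r : ℝ, 0 ≤ r → r < R →
      2 * ρstar - 1 ≤ sSup {w | ∃ ρ : ℝ, 0 < ρ ∧ w = (Ex ρ - (2 * ρ - 1) * r) / (R - r)} := by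
    intro r h0 hrR
    exact le_csSup (hbdd r h0 hrR) ⟨ρstar, hρpos, (hval r h0 hrR).symm⟩
  have hupp : sSup {w | ∃ ρ : ℝ, 0 < ρ ∧ w = (Ex ρ - (2 * ρ - 1) * Rh) / (R - Rh)} ≤
      2 * ρstar - 1 := by
    refine csSup_le ⟨_, ⟨ρstar, hρpos, rfl⟩⟩ ?_
    rintro w ⟨ρ, hρp, rfl⟩
    have hden : 0 < R - Rh := sub_pos.mpr hRhR
    rw [div_le_iff₀ hden]
    have hl := hline ρ hρp
    rw [hExstar] at hl
    nlinarith [hl]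
  have hsup_eq : sSup {w | ∃ ρ : ℝ, 0 < ρ ∧ w = (Ex ρ - (2 * ρ - 1) * Rh) / (R - Rh)} =
      2 * ρstar - 1 := le_antisymm hupp (hlow Rh hRh0 hRhR)
  constructor
  · apply le_antisymm
    · exact csInf_le ⟨2 * ρstar - 1, by rintro v ⟨r, h0, hrR, rfl⟩; exact hlow r h0 hrR⟩
        ⟨Rh, hRh0, hRhR, hsup_eq.symm⟩
    · exact le_csInf ⟨_, Rh, hRh0, hRhR, rfl⟩ (by rintro v ⟨r, h0, hrR, rfl⟩; exact hlow r h0 hrR)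
  · rw [hExstar]
    field_simp
end

section
/- Let R > 0 and suppose ρ* ≥ 1 satisfies E_x(ρ*,Q) = (2ρ*−1)R. Then the Csiszár-style expression inf_{R̂∈[0,R)} inf{ max_{s∈[0,1]} (Δ_s(P) + R̂)/(R − R̂) : P a probability distribution on 𝒳×𝒳 with D(P‖Q×Q) ≤ 2R̂ } equals the Gallager-style expression E_x(ρ*,Q)/R. -/
lemma mul_log_div_ge (p t : ℝ) (hp : 0 ≤ p) (ht : 0 < t) :
    p - t ≤ p * Real.log (p / t) := by
  rcases hp.eq_or_lt with h | h
  · rw [← h, zero_mul, zero_sub]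
    linarith
  · have h1 : Real.log (t / p) ≤ t / p - 1 := Real.log_le_sub_one_of_pos (div_pos ht h)
    have h2 : Real.log (p / t) = - Real.log (t / p) := by
      rw [← Real.log_inv]
      congr 1
      field_simp
    have h3 : p * (1 - t / p) = p - t := by field_simp
    have h5 : p * (1 - t / p) ≤ p * Real.log (p / t) :=
      mul_le_mul_of_nonneg_left (by rw [h2]; linarith) hp
    linarith

lemma kl_nonneg {ι : Type*} [Fintype ι] (P T : ι → ℝ) (hP : ∀ i, 0 ≤ P i)
    (hT : ∀ i, 0 < T i) (hPs : ∑ i, P i = 1) (hTs : ∑ i, T i = 1) :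
    0 ≤ ∑ i, P i * Real.log (P i / T i) := by
  have h : ∀ i ∈ Finset.univ, P i - T i ≤ P i * Real.log (P i / T i) :=
    fun i _ => mul_log_div_ge _ _ (hP i) (hT i)
  have h2 := Finset.sum_le_sum h
  rw [Finset.sum_sub_distrib, hPs, hTs] at h2
  linarith

/-- If `R > 0` and `ρ* ≥ 1` satisfies `E_x(ρ*,Q) = (2ρ*−1)R`, then the
Csiszár-style expression
`inf_{R̂∈[0,R)} inf_{P : D(P‖Q×Q) ≤ 2R̂} max_{s∈[0,1]} (Δ_s(P) + R̂)/(R − R̂)`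
equals the Gallager-style expression `E_x(ρ*,Q)/R`. -/
theorem stmt_9 {X Y : Type*} [Fintype X] [Fintype Y] [Nonempty X] [Nonempty Y]
    (W : X → Y → ℝ) (hWpos : ∀ x y, 0 < W x y) (hWsum : ∀ x, ∑ y, W x y = 1)
    (Q : X → ℝ) (hQpos : ∀ x, 0 < Q x) (hQsum : ∑ x, Q x = 1)
    (R ρstar : ℝ) (hR : 0 < R) (hρ : 1 ≤ ρstar)
    (heq : -ρstar * Real.log (∑ p : X × X, Q p.1 * Q p.2 *
        (∑ y, Real.sqrt (W p.1 y * W p.2 y)) ^ (1 / ρstar)) = (2 * ρstar - 1) * R) :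
    let d : ℝ → X → X → ℝ := fun s x x' => -Real.log (∑ y, W x y ^ (1 - s) * W x' y ^ s)
    let Δs : ℝ → (X × X → ℝ) → ℝ := fun s P => ∑ p : X × X, P p * d s p.1 p.2
    let D : (X × X → ℝ) → ℝ := fun P => ∑ p : X × X, P p * Real.log (P p / (Q p.1 * Q p.2))
    let Ex : ℝ → ℝ := fun ρ => -ρ * Real.log (∑ p : X × X, Q p.1 * Q p.2 *
        (∑ y, Real.sqrt (W p.1 y * W p.2 y)) ^ (1 / ρ))
    sInf {v | ∃ Rh : ℝ, 0 ≤ Rh ∧ Rh < R ∧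
        v = sInf {w | ∃ P : X × X → ℝ, ((∀ p, 0 ≤ P p) ∧ ∑ p : X × X, P p = 1) ∧
          D P ≤ 2 * Rh ∧
          w = sSup {u | ∃ s ∈ Set.Icc (0 : ℝ) 1, u = (Δs s P + Rh) / (R - Rh)}}} =
      Ex ρstar / R := by
  intro d Δs D Ex
  have hρ0 : (0:ℝ) < ρstar := lt_of_lt_of_le one_pos hρ
  have hρne : ρstar ≠ 0 := ne_of_gt hρ0
  have hWp : ∀ (x x' : X) (y : Y), 0 < W x y * W x' y :=
    fun x x' y => mul_pos (hWpos x y) (hWpos x' y)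
  have hQQ : ∀ p : X × X, 0 < Q p.1 * Q p.2 := fun p => mul_pos (hQpos p.1) (hQpos p.2)
  have hZpos : ∀ x x' : X, 0 < ∑ y, Real.sqrt (W x y * W x' y) := fun x x' =>
    Finset.sum_pos (fun y _ => Real.sqrt_pos.2 (hWp x x' y)) Finset.univ_nonempty
  have hZle : ∀ x x' : X, ∑ y, Real.sqrt (W x y * W x' y) ≤ 1 := by
    intro x x'
    have hcs := Finset.sum_sq_le_sum_mul_sum_of_sq_eq_mul Finset.univ
      (r := fun y => Real.sqrt (W x y * W x' y)) (f := fun y => W x y)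
      (g := fun y => W x' y)
      (fun y _ => le_of_lt (hWpos x y)) (fun y _ => le_of_lt (hWpos x' y))
      (fun y _ => Real.sq_sqrt (le_of_lt (hWp x x' y)))
    rw [hWsum x, hWsum x', mul_one] at hcs
    nlinarith [hZpos x x']
  have ha0 : ∀ x x' : X, 0 ≤ -Real.log (∑ y, Real.sqrt (W x y * W x' y)) := by
    intro x x'
    have := Real.log_nonpos (le_of_lt (hZpos x x')) (hZle x x')
    linarith
  set φ : ℝ := ∑ p : X × X, Q p.1 * Q p.2 * (∑ y, Real.sqrt (W p.1 y * W p.2 y)) ^ (1 / ρstar)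
    with hφdef
  have hφpos : 0 < φ := by
    rw [hφdef]
    exact Finset.sum_pos (fun p _ => mul_pos (hQQ p)
      (Real.rpow_pos_of_pos (hZpos p.1 p.2) _)) Finset.univ_nonempty
  have hlogφ : Real.log φ = -((2 * ρstar - 1) * R) / ρstar := by
    rw [eq_div_iff hρne]
    nlinarith [heq]
  set Pstar : X × X → ℝ := fun p =>
    Q p.1 * Q p.2 * (∑ y, Real.sqrt (W p.1 y * W p.2 y)) ^ (1 / ρstar) / φ with hPstardef
  have hPstarpos : ∀ p, 0 < Pstar p := fun p =>
    div_pos (mul_pos (hQQ p) (Real.rpow_pos_of_pos (hZpos p.1 p.2) _)) hφpos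
  have hPstarsum : ∑ p : X × X, Pstar p = 1 := by
    simp only [hPstardef]
    rw [← Finset.sum_div, ← hφdef, div_self (ne_of_gt hφpos)]
  -- KL decomposition with respect to Pstar
  have hdecomp : ∀ P : X × X → ℝ, (∀ p, 0 ≤ P p) → (∑ p : X × X, P p = 1) →
      ∑ p : X × X, P p * Real.log (P p / Pstar p) =
        D P + (∑ p : X × X, P p * (-Real.log (∑ y, Real.sqrt (W p.1 y * W p.2 y)))) / ρstar
          + Real.log φ := by
    intro P hP0 hP1
    have hterm : ∀ p : X × X, P p * Real.log (P p / Pstar p) =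
        P p * Real.log (P p / (Q p.1 * Q p.2))
          + P p * (-Real.log (∑ y, Real.sqrt (W p.1 y * W p.2 y))) / ρstar
          + P p * Real.log φ := by
      intro p
      rcases (hP0 p).eq_or_lt with h | h
      · rw [← h]; simp
      · have hZp := hZpos p.1 p.2
        have hlogP : Real.log (Pstar p) =
            Real.log (Q p.1 * Q p.2)
              + (1/ρstar) * Real.log (∑ y, Real.sqrt (W p.1 y * W p.2 y))
              - Real.log φ := by
          simp only [hPstardef]
          rw [Real.log_div (ne_of_gt (mul_pos (hQQ p) (Real.rpow_pos_of_pos hZp _)))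
                (ne_of_gt hφpos),
              Real.log_mul (ne_of_gt (hQQ p)) (ne_of_gt (Real.rpow_pos_of_pos hZp _)),
              Real.log_rpow hZp]
        rw [Real.log_div (ne_of_gt h) (ne_of_gt (hPstarpos p)),
            Real.log_div (ne_of_gt h) (ne_of_gt (hQQ p)), hlogP]
        field_simp
        ring
    rw [Finset.sum_congr rfl (fun p _ => hterm p)]
    simp only [D]
    rw [Finset.sum_add_distrib, Finset.sum_add_distrib, ← Finset.sum_div, ← Finset.sum_mul,
      hP1, one_mul]
  -- Gibbs variational lower bound
  have hGibbs : ∀ P : X × X → ℝ, (∀ p, 0 ≤ P p) → (∑ p : X × X, P p = 1) →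
      (2 * ρstar - 1) * R - ρstar * D P ≤
        ∑ p : X × X, P p * (-Real.log (∑ y, Real.sqrt (W p.1 y * W p.2 y))) := by
    intro P hP0 hP1
    have hkl := kl_nonneg P Pstar hP0 hPstarpos hP1 hPstarsum
    rw [hdecomp P hP0 hP1, hlogφ] at hkl
    have e1 : ρstar * (D P
        + (∑ p : X × X, P p * (-Real.log (∑ y, Real.sqrt (W p.1 y * W p.2 y)))) / ρstar
        + -((2 * ρstar - 1) * R) / ρstar)
        = ρstar * D P
          + (∑ p : X × X, P p * (-Real.log (∑ y, Real.sqrt (W p.1 y * W p.2 y))))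
          - (2 * ρstar - 1) * R := by
      field_simp
      ring
    nlinarith [mul_le_mul_of_nonneg_left hkl (le_of_lt hρ0), e1]
  -- Δs at s = 1/2
  have hd2 : ∀ P : X × X → ℝ, Δs (1/2) P =
      ∑ p : X × X, P p * (-Real.log (∑ y, Real.sqrt (W p.1 y * W p.2 y))) := by
    intro P
    simp only [Δs, d]
    refine Finset.sum_congr rfl fun p _ => ?_
    congr 2
    congr 1
    refine Finset.sum_congr rfl fun y _ => ?_
    rw [Real.sqrt_mul (le_of_lt (hWpos p.1 y)), Real.sqrt_eq_rpow, Real.sqrt_eq_rpow]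
    norm_num
  -- Cauchy–Schwarz: d s x x' + d s x' x ≤ 2 * a(x,x')
  have hCS : ∀ s : ℝ, 0 ≤ s → s ≤ 1 → ∀ x x' : X,
      d s x x' + d s x' x ≤ 2 * (-Real.log (∑ y, Real.sqrt (W x y * W x' y))) := by
    intro s hs0 hs1 x x'
    have hA : 0 < ∑ y, W x y ^ (1 - s) * W x' y ^ s :=
      Finset.sum_pos (fun y _ => mul_pos (Real.rpow_pos_of_pos (hWpos x y) _)
        (Real.rpow_pos_of_pos (hWpos x' y) _)) Finset.univ_nonempty
    have hB : 0 < ∑ y, W x' y ^ (1 - s) * W x y ^ s :=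
      Finset.sum_pos (fun y _ => mul_pos (Real.rpow_pos_of_pos (hWpos x' y) _)
        (Real.rpow_pos_of_pos (hWpos x y) _)) Finset.univ_nonempty
    have hcs := Finset.sum_sq_le_sum_mul_sum_of_sq_eq_mul Finset.univ
      (r := fun y => Real.sqrt (W x y * W x' y))
      (f := fun y => W x y ^ (1 - s) * W x' y ^ s)
      (g := fun y => W x' y ^ (1 - s) * W x y ^ s)
      (fun y _ => le_of_lt (mul_pos (Real.rpow_pos_of_pos (hWpos x y) _)
        (Real.rpow_pos_of_pos (hWpos x' y) _)))
      (fun y _ => le_of_lt (mul_pos (Real.rpow_pos_of_pos (hWpos x' y) _)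
        (Real.rpow_pos_of_pos (hWpos x y) _)))
      (fun y _ => by
        rw [Real.sq_sqrt (le_of_lt (hWp x x' y)),
          show W x y ^ (1-s) * W x' y ^ s * (W x' y ^ (1-s) * W x y ^ s)
            = (W x y ^ (1-s) * W x y ^ s) * (W x' y ^ s * W x' y ^ (1-s)) by ring,
          ← Real.rpow_add (hWpos x y), ← Real.rpow_add (hWpos x' y)]
        norm_num)
    have h2 : Real.log ((∑ y, Real.sqrt (W x y * W x' y)) ^ 2)
        ≤ Real.log ((∑ y, W x y ^ (1 - s) * W x' y ^ s) * ∑ y, W x' y ^ (1 - s) * W x y ^ s) :=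
      Real.log_le_log (pow_pos (hZpos x x') 2) hcs
    rw [Real.log_pow, Real.log_mul (ne_of_gt hA) (ne_of_gt hB)] at h2
    push_cast at h2
    simp only [d]
    linarith
  -- symmetry of Pstar
  have hZsym : ∀ x x' : X, (∑ y, Real.sqrt (W x' y * W x y)) = ∑ y, Real.sqrt (W x y * W x' y) :=
    fun x x' => Finset.sum_congr rfl fun y _ => by rw [mul_comm]
  have hPsym : ∀ x x' : X, Pstar (x', x) = Pstar (x, x') := by
    intro x x'
    simp only [hPstardef]
    rw [mul_comm (Q x') (Q x), hZsym x x']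
  -- s = 1/2 maximizes Δs for Pstar
  have hΔle : ∀ s : ℝ, 0 ≤ s → s ≤ 1 → Δs s Pstar ≤ Δs (1/2) Pstar := by
    intro s hs0 hs1
    have hswap : Δs s Pstar = ∑ p : X × X, Pstar p * d s p.2 p.1 := by
      simp only [Δs]
      rw [← Equiv.sum_comp (Equiv.prodComm X X) (fun p : X × X => Pstar p * d s p.2 p.1)]
      refine Fintype.sum_congr _ _ fun p => ?_
      simp only [Equiv.prodComm_apply]
      rw [show p.swap = (p.2, p.1) from rfl, hPsym p.1 p.2, Prod.mk.eta]
    have e1 : 2 * Δs s Pstar = ∑ p : X × X, Pstar p * (d s p.1 p.2 + d s p.2 p.1) := by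
      rw [two_mul]
      nth_rewrite 2 [hswap]
      simp only [Δs]
      rw [← Finset.sum_add_distrib]
      exact Finset.sum_congr rfl fun p _ => by ring
    have e2 : ∑ p : X × X, Pstar p * (d s p.1 p.2 + d s p.2 p.1)
        ≤ ∑ p : X × X, Pstar p * (2 * (-Real.log (∑ y, Real.sqrt (W p.1 y * W p.2 y)))) :=
      Finset.sum_le_sum fun p _ => mul_le_mul_of_nonneg_left (hCS s hs0 hs1 p.1 p.2)
        (le_of_lt (hPstarpos p))
    have e3 : ∑ p : X × X, Pstar p * (2 * (-Real.log (∑ y, Real.sqrt (W p.1 y * W p.2 y))))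
        = 2 * ∑ p : X × X, Pstar p * (-Real.log (∑ y, Real.sqrt (W p.1 y * W p.2 y))) := by
      rw [Finset.mul_sum]
      exact Finset.sum_congr rfl fun p _ => by ring
    have e4 := hd2 Pstar
    linarith
  -- facts about Pstar's divergence
  have hzero : ∑ p : X × X, Pstar p * Real.log (Pstar p / Pstar p) = 0 :=
    Finset.sum_eq_zero fun p _ => by
      rw [div_self (ne_of_gt (hPstarpos p)), Real.log_one, mul_zero]
  have hDPstar : D Pstar
      + (∑ p : X × X, Pstar p * (-Real.log (∑ y, Real.sqrt (W p.1 y * W p.2 y)))) / ρstar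
      + Real.log φ = 0 := by
    rw [← hdecomp Pstar (fun p => le_of_lt (hPstarpos p)) hPstarsum, hzero]
  have hQQsum : ∑ p : X × X, Q p.1 * Q p.2 = 1 := by
    rw [Fintype.sum_prod_type]
    have h1 : ∀ x : X, ∑ x' : X, Q x * Q x' = Q x := by
      intro x; rw [← Finset.mul_sum, hQsum, mul_one]
    rw [Finset.sum_congr rfl fun x _ => h1 x, hQsum]
  have hDnn : 0 ≤ D Pstar := by
    have := kl_nonneg Pstar (fun p : X × X => Q p.1 * Q p.2)
      (fun p => le_of_lt (hPstarpos p)) hQQ hPstarsum hQQsum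
    simpa only [D] using this
  have hEann : 0 ≤ ∑ p : X × X, Pstar p * (-Real.log (∑ y, Real.sqrt (W p.1 y * W p.2 y))) :=
    Finset.sum_nonneg fun p _ => mul_nonneg (le_of_lt (hPstarpos p)) (ha0 p.1 p.2)
  set Rhstar : ℝ := D Pstar / 2 with hRhdef
  have hRh0 : 0 ≤ Rhstar := by rw [hRhdef]; linarith
  have hEaval : ∑ p : X × X, Pstar p * (-Real.log (∑ y, Real.sqrt (W p.1 y * W p.2 y)))
      = (2 * ρstar - 1) * R - ρstar * D Pstar := by
    have h3 : (∑ p : X × X, Pstar p * (-Real.log (∑ y, Real.sqrt (W p.1 y * W p.2 y)))) / ρstar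
        = (2 * ρstar - 1) * R / ρstar - D Pstar := by
      rw [hlogφ, neg_div] at hDPstar
      linarith
    have h4 := congrArg (fun t => t * ρstar) h3
    rw [div_mul_cancel₀ _ hρne, sub_mul, div_mul_cancel₀ _ hρne] at h4
    linarith
  have hRhR : Rhstar < R := by
    have h2 : ρstar * D Pstar ≤ (2 * ρstar - 1) * R := by linarith [hEann, hEaval]
    rw [hRhdef]
    nlinarith [hρ, hR, hDnn]
  have hden : 0 < R - Rhstar := by linarith
  have hval : (∑ p : X × X, Pstar p * (-Real.log (∑ y, Real.sqrt (W p.1 y * W p.2 y)))) + Rhstar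
      = (2 * ρstar - 1) * (R - Rhstar) := by
    rw [hEaval, hRhdef]; ring
  have hwval : ((∑ p : X × X, Pstar p * (-Real.log (∑ y, Real.sqrt (W p.1 y * W p.2 y)))) + Rhstar)
      / (R - Rhstar) = 2 * ρstar - 1 := by
    rw [div_eq_iff (ne_of_gt hden)]
    exact hval
  -- uniform upper bound on d
  obtain ⟨q0, -, hq0⟩ := Finset.exists_min_image (Finset.univ : Finset (X × Y))
    (fun q => W q.1 q.2) ⟨(Classical.arbitrary X, Classical.arbitrary Y), Finset.mem_univ _⟩
  set m : ℝ := W q0.1 q0.2 with hmdef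
  have hm0 : 0 < m := by rw [hmdef]; exact hWpos _ _
  have hm1 : m ≤ 1 := by
    have h1 : W q0.1 q0.2 ≤ ∑ y, W q0.1 y :=
      Finset.single_le_sum (fun y _ => le_of_lt (hWpos q0.1 y)) (Finset.mem_univ q0.2)
    rw [hWsum q0.1] at h1
    rw [hmdef]; exact h1
  have hmle : ∀ x y, m ≤ W x y := fun x y => hq0 (x, y) (Finset.mem_univ _)
  have hdub : ∀ s : ℝ, 0 ≤ s → s ≤ 1 → ∀ x x' : X, d s x x' ≤ -Real.log (m * m) := by
    intro s hs0 hs1 x x'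
    have y0 : Y := Classical.arbitrary Y
    have h1 : m ≤ W x y0 ^ (1 - s) := by
      calc m = m ^ (1:ℝ) := (Real.rpow_one m).symm
      _ ≤ m ^ (1 - s) := Real.rpow_le_rpow_of_exponent_ge hm0 hm1 (by linarith)
      _ ≤ W x y0 ^ (1 - s) := Real.rpow_le_rpow (le_of_lt hm0) (hmle x y0) (by linarith)
    have h2 : m ≤ W x' y0 ^ s := by
      calc m = m ^ (1:ℝ) := (Real.rpow_one m).symm
      _ ≤ m ^ s := Real.rpow_le_rpow_of_exponent_ge hm0 hm1 hs1
      _ ≤ W x' y0 ^ s := Real.rpow_le_rpow (le_of_lt hm0) (hmle x' y0) hs0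
    have hterm : m * m ≤ W x y0 ^ (1 - s) * W x' y0 ^ s :=
      mul_le_mul h1 h2 (le_of_lt hm0) (le_of_lt (Real.rpow_pos_of_pos (hWpos x y0) _))
    have hsum : W x y0 ^ (1 - s) * W x' y0 ^ s ≤ ∑ y, W x y ^ (1 - s) * W x' y ^ s :=
      Finset.single_le_sum (fun y _ => le_of_lt (mul_pos (Real.rpow_pos_of_pos (hWpos x y) _)
        (Real.rpow_pos_of_pos (hWpos x' y) _))) (Finset.mem_univ y0)
    have h3 := Real.log_le_log (mul_pos hm0 hm0) (le_trans hterm hsum)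
    simp only [d]
    linarith
  have hΔub : ∀ (P : X × X → ℝ), (∀ p, 0 ≤ P p) → (∑ p : X × X, P p = 1) →
      ∀ s : ℝ, 0 ≤ s → s ≤ 1 → Δs s P ≤ -Real.log (m * m) := by
    intro P hP0 hP1 s hs0 hs1
    simp only [Δs]
    calc ∑ p : X × X, P p * d s p.1 p.2 ≤ ∑ p : X × X, P p * (-Real.log (m * m)) :=
      Finset.sum_le_sum fun p _ => mul_le_mul_of_nonneg_left (hdub s hs0 hs1 p.1 p.2) (hP0 p)
    _ = -Real.log (m * m) := by rw [← Finset.sum_mul, hP1, one_mul]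
  -- pointwise lower bound
  have hptLB : ∀ Rh : ℝ, 0 ≤ Rh → Rh < R → ∀ P : X × X → ℝ, (∀ p, 0 ≤ P p) →
      (∑ p : X × X, P p = 1) → D P ≤ 2 * Rh →
      2 * ρstar - 1 ≤ (Δs (1/2) P + Rh) / (R - Rh) := by
    intro Rh hRh0' hRhR' P hP0 hP1 hPD
    have hden' : 0 < R - Rh := by linarith
    rw [le_div_iff₀ hden']
    have hG := hGibbs P hP0 hP1
    rw [← hd2 P] at hG
    have hprod : ρstar * D P ≤ ρstar * (2 * Rh) :=
      mul_le_mul_of_nonneg_left hPD (le_of_lt hρ0)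
    nlinarith [hG, hprod, hRh0']
  -- lower bound for all members of the inner set
  have hInnerLB : ∀ Rh : ℝ, 0 ≤ Rh → Rh < R → ∀ w ∈ {w | ∃ P : X × X → ℝ,
      ((∀ p, 0 ≤ P p) ∧ ∑ p : X × X, P p = 1) ∧ D P ≤ 2 * Rh ∧
      w = sSup {u | ∃ s ∈ Set.Icc (0 : ℝ) 1, u = (Δs s P + Rh) / (R - Rh)}},
      2 * ρstar - 1 ≤ w := by
    rintro Rh hRh0' hRhR' w ⟨P, ⟨hP0, hP1⟩, hPD, rfl⟩
    have hden' : 0 < R - Rh := by linarith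
    have hmem : (Δs (1/2) P + Rh) / (R - Rh)
        ∈ {u | ∃ s ∈ Set.Icc (0 : ℝ) 1, u = (Δs s P + Rh) / (R - Rh)} :=
      ⟨1/2, ⟨by norm_num, by norm_num⟩, rfl⟩
    have hbdd : BddAbove {u | ∃ s ∈ Set.Icc (0 : ℝ) 1, u = (Δs s P + Rh) / (R - Rh)} := by
      refine ⟨(-Real.log (m * m) + Rh) / (R - Rh), ?_⟩
      rintro u ⟨s, hs, rfl⟩
      exact (div_le_div_iff_of_pos_right hden').2 (by linarith [hΔub P hP0 hP1 s hs.1 hs.2])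
    exact le_trans (hptLB Rh hRh0' hRhR' P hP0 hP1 hPD) (le_csSup hbdd hmem)
  -- the inner set is nonempty
  have hInnerNe : ∀ Rh : ℝ, 0 ≤ Rh → {w | ∃ P : X × X → ℝ,
      ((∀ p, 0 ≤ P p) ∧ ∑ p : X × X, P p = 1) ∧ D P ≤ 2 * Rh ∧
      w = sSup {u | ∃ s ∈ Set.Icc (0 : ℝ) 1, u = (Δs s P + Rh) / (R - Rh)}}.Nonempty := by
    intro Rh hRh0'
    have hD0 : D (fun p : X × X => Q p.1 * Q p.2) = 0 := by
      simp only [D]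
      exact Finset.sum_eq_zero fun p _ => by
        rw [div_self (ne_of_gt (hQQ p)), Real.log_one, mul_zero]
    exact ⟨_, fun p : X × X => Q p.1 * Q p.2,
      ⟨fun p => le_of_lt (hQQ p), hQQsum⟩, by rw [hD0]; linarith, rfl⟩
  -- the sSup at Pstar, Rhstar equals 2ρ*-1
  have hsSup : sSup {u | ∃ s ∈ Set.Icc (0 : ℝ) 1, u = (Δs s Pstar + Rhstar) / (R - Rhstar)}
      = 2 * ρstar - 1 := by
    have hgreat : IsGreatest {u | ∃ s ∈ Set.Icc (0 : ℝ) 1,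
        u = (Δs s Pstar + Rhstar) / (R - Rhstar)} (2 * ρstar - 1) := by
      constructor
      · refine ⟨1/2, ⟨by norm_num, by norm_num⟩, ?_⟩
        rw [hd2 Pstar, hwval]
      · rintro u ⟨s, hs, rfl⟩
        rw [← hwval]
        exact (div_le_div_iff_of_pos_right hden).2 (by linarith [hΔle s hs.1 hs.2, hd2 Pstar])
    exact hgreat.csSup_eq
  have hInnerInf : sInf {w | ∃ P : X × X → ℝ,
      ((∀ p, 0 ≤ P p) ∧ ∑ p : X × X, P p = 1) ∧ D P ≤ 2 * Rhstar ∧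
      w = sSup {u | ∃ s ∈ Set.Icc (0 : ℝ) 1, u = (Δs s P + Rhstar) / (R - Rhstar)}}
      = 2 * ρstar - 1 := by
    apply le_antisymm
    · apply csInf_le ⟨2 * ρstar - 1, fun w hw => hInnerLB Rhstar hRh0 hRhR w hw⟩
      exact ⟨Pstar, ⟨fun p => le_of_lt (hPstarpos p), hPstarsum⟩,
        le_of_eq (by rw [hRhdef]; ring), hsSup.symm⟩
    · exact le_csInf (hInnerNe Rhstar hRh0) (hInnerLB Rhstar hRh0 hRhR)
  have hRHS : Ex ρstar / R = 2 * ρstar - 1 := by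
    have hEx : Ex ρstar = (2 * ρstar - 1) * R := by
      simp only [Ex]
      rw [← hφdef]
      exact heq
    rw [hEx, mul_div_assoc, div_self (ne_of_gt hR), mul_one]
  rw [hRHS]
  apply le_antisymm
  · apply csInf_le
    · refine ⟨2 * ρstar - 1, ?_⟩
      rintro v ⟨Rh, hRh0', hRhR', rfl⟩
      exact le_csInf (hInnerNe Rh hRh0') (hInnerLB Rh hRh0' hRhR')
    · exact ⟨Rhstar, hRh0, hRhR, hInnerInf.symm⟩
  · apply le_csInf
    · exact ⟨_, Rhstar, hRh0, hRhR, rfl⟩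
    · rintro v ⟨Rh, hRh0', hRhR', rfl⟩
      exact le_csInf (hInnerNe Rh hRh0') (hInnerLB Rh hRh0' hRhR')
end

section
/- Suppose 0 < R < R_0(Q). If ρ₁ ≥ 1 satisfies E_x(ρ₁,Q) = ρ₁R and ρ₂ ≥ 1 satisfies E_x(ρ₂,Q) = (2ρ₂−1)R, then R_0(Q) ≤ E_x(ρ₂,Q) ≤ E_x(ρ₁,Q); equivalently, R_0(Q)/R ≤ E_x(ρ₂,Q)/R ≤ E_x(ρ₁,Q)/R, i.e., the typical random trellis code exponent lies between the random trellis coding exponent and the convolutional expurgated exponent. -/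
open Finset Real

/-- `S t = ∑ w i * Z i ^ t` is positive. -/
private lemma stmt15_S_pos {ι : Type*} [Fintype ι] [Nonempty ι] (w Z : ι → ℝ)
    (hw : ∀ i, 0 < w i) (hZ : ∀ i, 0 < Z i) (t : ℝ) :
    0 < ∑ i, w i * Z i ^ t :=
  Finset.sum_pos (fun i _ => mul_pos (hw i) (Real.rpow_pos_of_pos (hZ i) t))
    univ_nonempty

/-- Monotonicity of `ρ ↦ -ρ log ∑ w Z^(1/ρ)` (Jensen / power mean). -/
private lemma stmt15_Ex_mono {ι : Type*} [Fintype ι] [Nonempty ι] (w Z : ι → ℝ)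
    (hw : ∀ i, 0 < w i) (hw1 : ∑ i, w i = 1) (hZ : ∀ i, 0 < Z i)
    {a b : ℝ} (ha : 0 < a) (hab : a ≤ b) :
    -a * Real.log (∑ i, w i * Z i ^ (1/a)) ≤ -b * Real.log (∑ i, w i * Z i ^ (1/b)) := by
  have hb : 0 < b := lt_of_lt_of_le ha hab
  have hp : (1:ℝ) ≤ b / a := (one_le_div ha).mpr hab
  have hSb : 0 < ∑ i, w i * Z i ^ (1/b) := stmt15_S_pos w Z hw hZ _
  have hSa : 0 < ∑ i, w i * Z i ^ (1/a) := stmt15_S_pos w Z hw hZ _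
  have key : ∑ i, w i * Z i ^ (1/b) ≤ (∑ i, w i * Z i ^ (1/a)) ^ (a/b) := by
    have h := Real.arith_mean_le_rpow_mean (univ : Finset ι) w (fun i => Z i ^ (1/b))
      (fun i _ => (hw i).le) hw1 (fun i _ => (Real.rpow_pos_of_pos (hZ i) _).le) hp
    have e1 : ∀ i : ι, (Z i ^ (1/b)) ^ (b/a) = Z i ^ (1/a) := by
      intro i
      rw [← Real.rpow_mul (hZ i).le]
      congr 1
      field_simp
    have e2 : (1:ℝ) / (b / a) = a / b := one_div_div b a
    simpa only [e1, e2] using h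
  have hlog : Real.log (∑ i, w i * Z i ^ (1/b)) ≤
      (a/b) * Real.log (∑ i, w i * Z i ^ (1/a)) := by
    calc Real.log (∑ i, w i * Z i ^ (1/b))
        ≤ Real.log ((∑ i, w i * Z i ^ (1/a)) ^ (a/b)) := Real.log_le_log hSb key
      _ = (a/b) * Real.log (∑ i, w i * Z i ^ (1/a)) := Real.log_rpow hSa _
  have h3 := mul_le_mul_of_nonpos_left hlog (by linarith : -b ≤ 0)
  have h4 : -b * ((a/b) * Real.log (∑ i, w i * Z i ^ (1/a)))
      = -a * Real.log (∑ i, w i * Z i ^ (1/a)) := by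
    field_simp
  linarith [h3, h4.ge, h4.le]

/-- Antitonicity of `ρ ↦ -log ∑ w Z^(1/ρ)` when all `Z ≤ 1`. -/
private lemma stmt15_g_anti {ι : Type*} [Fintype ι] [Nonempty ι] (w Z : ι → ℝ)
    (hw : ∀ i, 0 < w i) (hZ : ∀ i, 0 < Z i) (hZ1 : ∀ i, Z i ≤ 1)
    {a b : ℝ} (ha : 0 < a) (hab : a ≤ b) :
    -Real.log (∑ i, w i * Z i ^ (1/b)) ≤ -Real.log (∑ i, w i * Z i ^ (1/a)) := by
  have hb : 0 < b := lt_of_lt_of_le ha hab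
  have hSa : 0 < ∑ i, w i * Z i ^ (1/a) := stmt15_S_pos w Z hw hZ _
  have hle : ∑ i, w i * Z i ^ (1/a) ≤ ∑ i, w i * Z i ^ (1/b) := by
    apply Finset.sum_le_sum
    intro i _
    refine mul_le_mul_of_nonneg_left ?_ (hw i).le
    exact Real.rpow_le_rpow_of_exponent_ge (hZ i) (hZ1 i)
      (by apply one_div_le_one_div_of_le ha hab)
  have := Real.log_le_log hSa hle
  linarith

/-- For `0 < R < R₀(Q)`, if `ρ₁ ≥ 1` solves `E_x(ρ₁,Q) = ρ₁ R` and
`ρ₂ ≥ 1` solves `E_x(ρ₂,Q) = (2ρ₂−1) R`, then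
`R₀(Q) ≤ E_x(ρ₂,Q) ≤ E_x(ρ₁,Q)`, equivalently
`R₀(Q)/R ≤ E_x(ρ₂,Q)/R ≤ E_x(ρ₁,Q)/R`: the typical random trellis code exponent
lies between the random trellis coding exponent and the expurgated exponent. -/
theorem stmt_15 {X Y : Type*} [Fintype X] [Fintype Y] [Nonempty X] [Nonempty Y]
    (W : X → Y → ℝ) (hWpos : ∀ x y, 0 < W x y) (hWsum : ∀ x, ∑ y, W x y = 1)
    (Q : X → ℝ) (hQpos : ∀ x, 0 < Q x) (hQsum : ∑ x, Q x = 1)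
    (R ρ₁ ρ₂ : ℝ) (hR : 0 < R)
    (hRR0 : R < -Real.log (∑ y, (∑ x, Q x * Real.sqrt (W x y)) ^ 2))
    (hρ₁ : 1 ≤ ρ₁) (hρ₂ : 1 ≤ ρ₂)
    (h₁ : -ρ₁ * Real.log (∑ p : X × X, Q p.1 * Q p.2 *
        (∑ y, Real.sqrt (W p.1 y * W p.2 y)) ^ (1 / ρ₁)) = ρ₁ * R)
    (h₂ : -ρ₂ * Real.log (∑ p : X × X, Q p.1 * Q p.2 *
        (∑ y, Real.sqrt (W p.1 y * W p.2 y)) ^ (1 / ρ₂)) = (2 * ρ₂ - 1) * R) :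
    let Ex : ℝ → ℝ := fun ρ => -ρ * Real.log (∑ p : X × X, Q p.1 * Q p.2 *
        (∑ y, Real.sqrt (W p.1 y * W p.2 y)) ^ (1 / ρ))
    let R0 : ℝ := -Real.log (∑ y, (∑ x, Q x * Real.sqrt (W x y)) ^ 2)
    (R0 ≤ Ex ρ₂ ∧ Ex ρ₂ ≤ Ex ρ₁) ∧
    (R0 / R ≤ Ex ρ₂ / R ∧ Ex ρ₂ / R ≤ Ex ρ₁ / R) := by
  intro Ex R0
  set Zf : X × X → ℝ := fun p => ∑ y, Real.sqrt (W p.1 y * W p.2 y) with hZf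
  set wf : X × X → ℝ := fun p => Q p.1 * Q p.2 with hwf
  have hwpos : ∀ p : X × X, 0 < wf p := fun p => mul_pos (hQpos p.1) (hQpos p.2)
  have hw1 : ∑ p : X × X, wf p = 1 := by
    rw [Fintype.sum_prod_type]
    simp only [hwf]
    simp_rw [← Finset.mul_sum, hQsum, mul_one]
    exact hQsum
  have hZpos : ∀ p : X × X, 0 < Zf p := by
    intro p
    refine Finset.sum_pos (fun y _ => Real.sqrt_pos.mpr ?_) univ_nonempty
    exact mul_pos (hWpos p.1 y) (hWpos p.2 y)
  have hZle1 : ∀ p : X × X, Zf p ≤ 1 := by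
    intro p
    have hcs := sum_sq_le_sum_mul_sum_of_sq_eq_mul (univ : Finset Y)
      (r := fun y => Real.sqrt (W p.1 y * W p.2 y)) (f := fun y => W p.1 y)
      (g := fun y => W p.2 y)
      (fun y _ => (hWpos p.1 y).le) (fun y _ => (hWpos p.2 y).le)
      (fun y _ => Real.sq_sqrt (mul_pos (hWpos p.1 y) (hWpos p.2 y)).le)
    rw [hWsum p.1, hWsum p.2, mul_one] at hcs
    nlinarith [hZpos p]
  -- Ex is nondecreasing
  have hmono : ∀ {a b : ℝ}, 0 < a → a ≤ b → Ex a ≤ Ex b := by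
    intro a b ha hab
    exact stmt15_Ex_mono wf Zf hwpos hw1 hZpos ha hab
  -- Ex 1 = R0
  have hsum_eq : ∑ p : X × X, wf p * Zf p = ∑ y, (∑ x, Q x * Real.sqrt (W x y)) ^ 2 := by
    have step : ∀ p : X × X, wf p * Zf p
        = ∑ y, (Q p.1 * Real.sqrt (W p.1 y)) * (Q p.2 * Real.sqrt (W p.2 y)) := by
      intro p
      simp only [hwf, hZf, Finset.mul_sum]
      refine Finset.sum_congr rfl fun y _ => ?_
      rw [Real.sqrt_mul (hWpos p.1 y).le]
      ring
    calc ∑ p : X × X, wf p * Zf p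
        = ∑ p : X × X, ∑ y, (Q p.1 * Real.sqrt (W p.1 y)) * (Q p.2 * Real.sqrt (W p.2 y)) :=
          Finset.sum_congr rfl fun p _ => step p
      _ = ∑ y, ∑ p : X × X, (Q p.1 * Real.sqrt (W p.1 y)) * (Q p.2 * Real.sqrt (W p.2 y)) :=
          Finset.sum_comm
      _ = ∑ y, (∑ x, Q x * Real.sqrt (W x y)) ^ 2 := by
          refine Finset.sum_congr rfl fun y _ => ?_
          rw [sq, Finset.sum_mul_sum, Fintype.sum_prod_type]
  have hEx1 : Ex 1 = R0 := by
    show -1 * Real.log (∑ p : X × X, wf p * Zf p ^ ((1:ℝ)/1)) = R0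
    rw [show (1:ℝ)/1 = 1 by norm_num]
    simp_rw [Real.rpow_one]
    rw [hsum_eq]
    simp [R0]
  have hρ₁pos : (0:ℝ) < ρ₁ := lt_of_lt_of_le one_pos hρ₁
  have hρ₂pos : (0:ℝ) < ρ₂ := lt_of_lt_of_le one_pos hρ₂
  -- ρ₂ ≤ ρ₁
  have hle : ρ₂ ≤ ρ₁ := by
    by_contra hcon
    push_neg at hcon
    have hanti := stmt15_g_anti wf Zf hwpos hZpos hZle1 hρ₁pos hcon.le
    -- extract log values
    have hLa : Real.log (∑ p : X × X, wf p * Zf p ^ (1/ρ₁)) = -R := by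
      apply mul_left_cancel₀ (ne_of_gt hρ₁pos)
      have := h₁
      nlinarith [h₁]
    rw [hLa] at hanti
    set Lb := Real.log (∑ p : X × X, wf p * Zf p ^ (1/ρ₂)) with hLbdef
    -- hanti : -Lb ≤ R ; h₂ : -ρ₂ * Lb = (2ρ₂-1) R
    have h₂' : -ρ₂ * Lb = (2 * ρ₂ - 1) * R := h₂
    nlinarith [mul_nonneg hρ₂pos.le (by linarith : (0:ℝ) ≤ Lb + R),
      mul_pos (by linarith : (0:ℝ) < ρ₂ - 1) hR]
  have hA : R0 ≤ Ex ρ₂ := hEx1 ▸ hmono one_pos hρ₂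
  have hB : Ex ρ₂ ≤ Ex ρ₁ := hmono hρ₂pos hle
  exact ⟨⟨hA, hB⟩, (div_le_div_iff_of_pos_right hR).mpr hA, (div_le_div_iff_of_pos_right hR).mpr hB⟩
end

section
/- The function ρ ↦ E_x(ρ,Q) is nondecreasing on (0,∞), satisfies E_x(ρ,Q) ≤ −Σ_{x,x'} Q(x)Q(x') log Z(x,x') for every ρ > 0, and lim_{ρ→∞} E_x(ρ,Q) = −Σ_{x,x'} Q(x)Q(x') log Z(x,x') (the zero-rate expurgated exponent). -/
/-!
Put `t = 1/ρ` and `L(t) = log ∑ₚ q(p) Z(p)^t` with `q(x, x') = Q(x) Q(x')`, so that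
`E_x(ρ, Q) = -L(t)/t`. By the power mean inequality `(∑ q Z^s)^(1/s)` is nondecreasing in `s`,
i.e. `L(t)/t` is nondecreasing in `t`, which is monotonicity of `E_x` in `ρ`. Since `L(0) = 0`,
`L(t)/t` tends to `L'(0) = ∑ q log Z` as `t → 0⁺`, i.e. as `ρ → ∞`, and the upper bound is the
limit of a nondecreasing function.
-/

open Real Filter Topology Set

section

variable {ι : Type*} [Fintype ι] {w z : ι → ℝ}

noncomputable def logSumRpow (w z : ι → ℝ) (t : ℝ) : ℝ := log (∑ i, w i * z i ^ t)

lemma sum_mul_rpow_pos (hw : ∀ i, 0 ≤ w i) (hw1 : ∑ i, w i = 1) (hz : ∀ i, 0 < z i) (t : ℝ) :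
    0 < ∑ i, w i * z i ^ t := by
  obtain ⟨i, -, hi⟩ : ∃ i ∈ Finset.univ, (0 : ℝ) < w i :=
    Finset.exists_lt_of_sum_lt (by simp [hw1])
  exact Finset.sum_pos' (fun j _ => mul_nonneg (hw j) (rpow_pos_of_pos (hz j) t).le)
    ⟨i, Finset.mem_univ i, mul_pos hi (rpow_pos_of_pos (hz i) t)⟩

lemma logSumRpow_div_monotoneOn (hw : ∀ i, 0 ≤ w i) (hw1 : ∑ i, w i = 1) (hz : ∀ i, 0 < z i) :
    MonotoneOn (fun t => logSumRpow w z t / t) (Ioi 0) := by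
  intro s (hs : 0 < s) t (ht : 0 < t) hst
  have hpow : ∀ i, (z i ^ s) ^ (t / s) = z i ^ t := fun i => by
    rw [← rpow_mul (hz i).le, mul_div_cancel₀ _ hs.ne']
  have hmean : ∑ i, w i * z i ^ s ≤ (∑ i, w i * z i ^ t) ^ (1 / (t / s)) := by
    simpa only [hpow] using Real.arith_mean_le_rpow_mean Finset.univ w (fun i => z i ^ s)
      (fun i _ => hw i) hw1 (fun i _ => (rpow_pos_of_pos (hz i) s).le) ((one_le_div hs).2 hst)
  have hlog : logSumRpow w z s ≤ s / t * logSumRpow w z t := by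
    calc logSumRpow w z s ≤ log ((∑ i, w i * z i ^ t) ^ (1 / (t / s))) :=
          log_le_log (sum_mul_rpow_pos hw hw1 hz s) hmean
      _ = s / t * logSumRpow w z t := by
          rw [log_rpow (sum_mul_rpow_pos hw hw1 hz t), one_div_div, logSumRpow]
  calc logSumRpow w z s / s ≤ s / t * logSumRpow w z t / s := by gcongr
    _ = logSumRpow w z t / t := by field_simp

lemma hasDerivAt_logSumRpow_zero (hw1 : ∑ i, w i = 1) (hz : ∀ i, 0 < z i) :
    HasDerivAt (logSumRpow w z) (∑ i, w i * log (z i)) 0 := by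
  have hsum : HasDerivAt (fun t : ℝ => ∑ i, w i * z i ^ t) (∑ i, w i * log (z i)) 0 := by
    simpa using HasDerivAt.fun_sum fun i _ =>
      (hasStrictDerivAt_const_rpow (hz i) 0).hasDerivAt.const_mul (w i)
  have hone : ∑ i, w i * z i ^ (0 : ℝ) = 1 := by simp [hw1]
  have hlog := hsum.log (hone ▸ one_ne_zero)
  rwa [hone, div_one] at hlog

lemma tendsto_logSumRpow_div_nhdsGT_zero (hw1 : ∑ i, w i = 1) (hz : ∀ i, 0 < z i) :
    Tendsto (fun t => logSumRpow w z t / t) (𝓝[>] 0) (𝓝 (∑ i, w i * log (z i))) := by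
  have hslope := hasDerivAt_iff_tendsto_slope.1 (hasDerivAt_logSumRpow_zero hw1 hz)
  have hzero : logSumRpow w z 0 = 0 := by simp [logSumRpow, hw1]
  refine (hslope.mono_left (nhdsWithin_mono _ fun t (ht : 0 < t) => ht.ne')).congr fun t => ?_
  simp [slope_def_field, hzero]

noncomputable def expurgatedExponent (w z : ι → ℝ) (ρ : ℝ) : ℝ :=
  -ρ * log (∑ i, w i * z i ^ (1 / ρ))

lemma expurgatedExponent_eq (ρ : ℝ) :
    expurgatedExponent w z ρ = -(logSumRpow w z ρ⁻¹ / ρ⁻¹) := by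
  rw [expurgatedExponent, logSumRpow, div_inv_eq_mul, one_div]
  ring

lemma expurgatedExponent_monotoneOn (hw : ∀ i, 0 ≤ w i) (hw1 : ∑ i, w i = 1)
    (hz : ∀ i, 0 < z i) : MonotoneOn (expurgatedExponent w z) (Ioi 0) := by
  intro a (ha : 0 < a) b (hb : 0 < b) hab
  simp only [expurgatedExponent_eq, neg_le_neg_iff]
  exact logSumRpow_div_monotoneOn hw hw1 hz (inv_pos.2 hb) (inv_pos.2 ha)
    (inv_anti₀ ha hab)

lemma tendsto_expurgatedExponent_atTop (hw1 : ∑ i, w i = 1) (hz : ∀ i, 0 < z i) :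
    Tendsto (expurgatedExponent w z) atTop (𝓝 (-∑ i, w i * log (z i))) := by
  rw [funext expurgatedExponent_eq]
  exact ((tendsto_logSumRpow_div_nhdsGT_zero hw1 hz).comp tendsto_inv_atTop_nhdsGT_zero).neg

lemma expurgatedExponent_le (hw : ∀ i, 0 ≤ w i) (hw1 : ∑ i, w i = 1) (hz : ∀ i, 0 < z i)
    {ρ : ℝ} (hρ : 0 < ρ) : expurgatedExponent w z ρ ≤ -∑ i, w i * log (z i) :=
  ge_of_tendsto (tendsto_expurgatedExponent_atTop hw1 hz) <|
    (eventually_ge_atTop ρ).mono fun _ hρσ =>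
      expurgatedExponent_monotoneOn hw hw1 hz hρ (hρ.trans_le hρσ) hρσ

end

theorem stmt_16_general {X Y : Type*} [Fintype X] [Fintype Y] [Nonempty Y]
    (W : X → Y → ℝ) (hWpos : ∀ x y, 0 < W x y)
    (Q : X → ℝ) (hQpos : ∀ x, 0 < Q x) (hQsum : ∑ x, Q x = 1) :
    let Z : X → X → ℝ := fun x x' => ∑ y, Real.sqrt (W x y * W x' y)
    let Ex : ℝ → ℝ := fun ρ => -ρ * Real.log (∑ p : X × X, Q p.1 * Q p.2 * Z p.1 p.2 ^ (1 / ρ))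
    let C : ℝ := -∑ p : X × X, Q p.1 * Q p.2 * Real.log (Z p.1 p.2)
    MonotoneOn Ex (Set.Ioi (0 : ℝ)) ∧
    (∀ ρ : ℝ, 0 < ρ → Ex ρ ≤ C) ∧
    Filter.Tendsto Ex Filter.atTop (nhds C) := by
  intro Z Ex C
  have hq : ∀ p : X × X, 0 ≤ Q p.1 * Q p.2 := fun p => (mul_pos (hQpos p.1) (hQpos p.2)).le
  have hq1 : ∑ p : X × X, Q p.1 * Q p.2 = 1 := by
    rw [Fintype.sum_prod_type, ← Finset.sum_mul_sum, hQsum, mul_one]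
  have hZ : ∀ p : X × X, 0 < Z p.1 p.2 := fun p =>
    Finset.sum_pos (fun y _ => sqrt_pos.2 (mul_pos (hWpos p.1 y) (hWpos p.2 y)))
      Finset.univ_nonempty
  exact ⟨expurgatedExponent_monotoneOn hq hq1 hZ,
    fun ρ hρ => expurgatedExponent_le hq hq1 hZ hρ, tendsto_expurgatedExponent_atTop hq1 hZ⟩

/-- `ρ ↦ E_x(ρ,Q)` is nondecreasing on `(0,∞)`, bounded above by the
zero-rate expurgated exponent `−∑_{x,x'} Q x Q x' log Z(x,x')`, and converges to it
as `ρ → ∞`. -/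
theorem stmt_16 {X Y : Type*} [Fintype X] [Fintype Y] [Nonempty X] [Nonempty Y]
    (W : X → Y → ℝ) (hWpos : ∀ x y, 0 < W x y) (hWsum : ∀ x, ∑ y, W x y = 1)
    (Q : X → ℝ) (hQpos : ∀ x, 0 < Q x) (hQsum : ∑ x, Q x = 1) :
    let Z : X → X → ℝ := fun x x' => ∑ y, Real.sqrt (W x y * W x' y)
    let Ex : ℝ → ℝ := fun ρ => -ρ * Real.log (∑ p : X × X, Q p.1 * Q p.2 * Z p.1 p.2 ^ (1 / ρ))
    let C : ℝ := -∑ p : X × X, Q p.1 * Q p.2 * Real.log (Z p.1 p.2)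
    MonotoneOn Ex (Set.Ioi (0 : ℝ)) ∧
    (∀ ρ : ℝ, 0 < ρ → Ex ρ ≤ C) ∧
    Filter.Tendsto Ex Filter.atTop (nhds C) :=
  stmt_16_general W hWpos Q hQpos hQsum
end

section
/- The function ρ ↦ E_x(ρ,Q)/ρ = −log Σ_{x,x'} Q(x)Q(x') Z(x,x')^{1/ρ} is nonincreasing on (0,∞). -/
/-- `ρ ↦ E_x(ρ,Q)/ρ = −log ∑_{x,x'} Q x Q x' Z(x,x')^{1/ρ}` is
nonincreasing on `(0,∞)`. -/
theorem stmt_17 {X Y : Type*} [Fintype X] [Fintype Y] [Nonempty X] [Nonempty Y]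
    (W : X → Y → ℝ) (hWpos : ∀ x y, 0 < W x y) (hWsum : ∀ x, ∑ y, W x y = 1)
    (Q : X → ℝ) (hQpos : ∀ x, 0 < Q x) (hQsum : ∑ x, Q x = 1) :
    AntitoneOn
      (fun ρ : ℝ => -Real.log (∑ p : X × X, Q p.1 * Q p.2 *
        (∑ y, Real.sqrt (W p.1 y * W p.2 y)) ^ (1 / ρ)))
      (Set.Ioi (0 : ℝ)) := by
  have hZpos : ∀ p : X × X, 0 < ∑ y, Real.sqrt (W p.1 y * W p.2 y) := fun p =>
    Finset.sum_pos (fun y _ => Real.sqrt_pos.2 (mul_pos (hWpos _ y) (hWpos _ y)))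
      Finset.univ_nonempty
  have hZle : ∀ p : X × X, (∑ y, Real.sqrt (W p.1 y * W p.2 y)) ≤ 1 := by
    intro p
    have h := Finset.sum_mul_sq_le_sq_mul_sq Finset.univ
      (fun y => Real.sqrt (W p.1 y)) (fun y => Real.sqrt (W p.2 y))
    have h1 : ∑ y, Real.sqrt (W p.1 y) * Real.sqrt (W p.2 y)
        = ∑ y, Real.sqrt (W p.1 y * W p.2 y) := by
      refine Finset.sum_congr rfl fun y _ => ?_
      rw [Real.sqrt_mul (hWpos _ y).le]
    have h2 : ∀ x : X, ∑ y, Real.sqrt (W x y) ^ 2 = 1 := by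
      intro x
      rw [← hWsum x]
      exact Finset.sum_congr rfl fun y _ => Real.sq_sqrt (hWpos _ y).le
    rw [h1, h2, h2, mul_one] at h
    nlinarith [(hZpos p).le]
  intro a ha b hb hab
  simp only [Set.mem_Ioi] at ha hb
  have hS : ∀ ρ : ℝ, 0 < ρ → 0 < ∑ p : X × X, Q p.1 * Q p.2 *
      (∑ y, Real.sqrt (W p.1 y * W p.2 y)) ^ (1 / ρ) := by
    intro ρ hρ
    exact Finset.sum_pos (fun p _ => mul_pos (mul_pos (hQpos _) (hQpos _))
      (Real.rpow_pos_of_pos (hZpos p) _)) Finset.univ_nonempty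
  have hmono : (∑ p : X × X, Q p.1 * Q p.2 *
        (∑ y, Real.sqrt (W p.1 y * W p.2 y)) ^ (1 / a))
      ≤ ∑ p : X × X, Q p.1 * Q p.2 *
        (∑ y, Real.sqrt (W p.1 y * W p.2 y)) ^ (1 / b) := by
    refine Finset.sum_le_sum fun p _ => ?_
    refine mul_le_mul_of_nonneg_left ?_ (mul_pos (hQpos _) (hQpos _)).le
    exact Real.rpow_le_rpow_of_exponent_ge (hZpos p) (hZle p)
      (one_div_le_one_div_of_le ha hab)
  simp only [neg_le_neg_iff]
  exact Real.log_le_log (hS a ha) hmono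
end

section
/- Suppose 0 < R < R_0(Q). Then there exists ρ₁ ≥ 1 with E_x(ρ₁,Q) = ρ₁R, and there exists ρ₂ ≥ 1 with E_x(ρ₂,Q) = (2ρ₂−1)R. -/
/-!
At `ρ = 1` the exponent is the cutoff rate, `E_x(1,Q) = R₀(Q) > R`. By Jensen's inequality for the
concave logarithm, `E_x(ρ,Q) ≤ -∑ Q(x)Q(x') log Z(x,x')` for every `ρ > 0`, so `E_x(·,Q)` stays
bounded while the lines `ρR` and `(2ρ-1)R` grow without bound; the intermediate value theorem on a
long enough interval `[1, b]` produces both crossing points.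
-/

open Real Set

lemma exists_eq_mul_add_of_continuousOn_Ici {E : ℝ → ℝ} {M a c : ℝ}
    (hE : ContinuousOn E (Ici 1)) (hM : ∀ ρ, 1 ≤ ρ → E ρ ≤ M) (ha : 0 < a) (h1 : a + c ≤ E 1) :
    ∃ ρ, 1 ≤ ρ ∧ E ρ = a * ρ + c := by
  set b := max 1 ((M - c) / a)
  have hb : 1 ≤ b := le_max_left _ _
  have hEb : E b ≤ a * b + c := by
    have : M - c ≤ a * b := (div_le_iff₀' ha).1 (le_max_right _ _)
    linarith [hM b hb]
  have hcont : ContinuousOn (fun ρ => E ρ - (a * ρ + c)) (Icc 1 b) :=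
    (hE.mono Icc_subset_Ici_self).sub (by fun_prop)
  obtain ⟨ρ, hρ, hρ0⟩ := intermediate_value_Icc' hb hcont
    (show (0 : ℝ) ∈ Icc _ _ from ⟨by linarith, by linarith⟩)
  exact ⟨ρ, hρ.1, sub_eq_zero.1 hρ0⟩

section GallagerExponent

variable {ι : Type*} [Fintype ι] {w Z : ι → ℝ}

/-- `E_x(ρ,Q)` is the case `i = (x,x')`, `w = Q ⊗ Q`, `Z = Z(x,x')`. -/
noncomputable def gallagerExponent (w Z : ι → ℝ) (ρ : ℝ) : ℝ :=
  -ρ * log (∑ i, w i * Z i ^ (1 / ρ))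

lemma gallagerExponent_one (w Z : ι → ℝ) : gallagerExponent w Z 1 = -log (∑ i, w i * Z i) := by
  simp [gallagerExponent]

lemma gallagerExponent_le (hw0 : ∀ i, 0 ≤ w i) (hw1 : ∑ i, w i = 1) (hZ : ∀ i, 0 < Z i)
    {ρ : ℝ} (hρ : 0 < ρ) : gallagerExponent w Z ρ ≤ -∑ i, w i * log (Z i) := by
  have hjensen : ∑ i, w i * (1 / ρ * log (Z i)) ≤ log (∑ i, w i * Z i ^ (1 / ρ)) := by
    have := strictConcaveOn_log_Ioi.concaveOn.le_map_sum (t := Finset.univ)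
      (p := fun i => Z i ^ (1 / ρ)) (fun i _ => hw0 i) hw1 (fun i _ => rpow_pos_of_pos (hZ i) _)
    simpa only [smul_eq_mul, log_rpow (hZ _)] using this
  have hsum : ∑ i, w i * (1 / ρ * log (Z i)) = (∑ i, w i * log (Z i)) / ρ := by
    rw [Finset.sum_div]
    exact Finset.sum_congr rfl fun i _ => by ring
  rw [hsum, div_le_iff₀ hρ] at hjensen
  unfold gallagerExponent
  linarith

lemma continuousOn_gallagerExponent (hw0 : ∀ i, 0 ≤ w i) (hw1 : ∑ i, w i = 1)
    (hZ : ∀ i, 0 < Z i) : ContinuousOn (gallagerExponent w Z) (Ioi 0) := by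
  obtain ⟨j, -, hj⟩ : ∃ j ∈ Finset.univ, (0 : ℝ) < w j :=
    Finset.exists_lt_of_sum_lt (f := fun _ => 0) (by simp [hw1])
  have hS : ∀ ρ : ℝ, 0 < ∑ i, w i * Z i ^ (1 / ρ) := fun ρ =>
    Finset.sum_pos' (fun i _ => mul_nonneg (hw0 i) (rpow_pos_of_pos (hZ i) _).le)
      ⟨j, Finset.mem_univ j, mul_pos hj (rpow_pos_of_pos (hZ j) _)⟩
  have hcont : ContinuousOn (fun ρ : ℝ => ∑ i, w i * Z i ^ (1 / ρ)) (Ioi 0) := by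
    refine continuousOn_finsetSum _ fun i _ => continuousOn_const.mul ?_
    exact continuousOn_const.rpow (continuousOn_const.div continuousOn_id fun _ hρ => ne_of_gt hρ)
      fun _ _ => Or.inl (hZ i).ne'
  exact continuousOn_id.neg.mul (hcont.log fun ρ _ => (hS ρ).ne')

end GallagerExponent

lemma sum_mul_sum_sqrt_mul_eq_sum_sq {X Y : Type*} [Fintype X] [Fintype Y] {W : X → Y → ℝ}
    (hW : ∀ x y, 0 ≤ W x y) (Q : X → ℝ) :
    ∑ p : X × X, Q p.1 * Q p.2 * ∑ y, √(W p.1 y * W p.2 y) = ∑ y, (∑ x, Q x * √(W x y)) ^ 2 := by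
  simp_rw [sq, Fintype.sum_mul_sum, Fintype.sum_prod_type, Finset.mul_sum, sqrt_mul (hW _ _)]
  conv_rhs => rw [Finset.sum_comm]
  refine Finset.sum_congr rfl fun x _ => ?_
  conv_rhs => rw [Finset.sum_comm]
  exact Finset.sum_congr rfl fun x' _ => Finset.sum_congr rfl fun y _ => by ring

theorem stmt_18_general {X Y : Type*} [Fintype X] [Fintype Y] [Nonempty Y]
    (W : X → Y → ℝ) (hWpos : ∀ x y, 0 < W x y)
    (Q : X → ℝ) (hQpos : ∀ x, 0 < Q x) (hQsum : ∑ x, Q x = 1)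
    (R : ℝ) (hR : 0 < R)
    (hRR0 : R < -Real.log (∑ y, (∑ x, Q x * Real.sqrt (W x y)) ^ 2)) :
    let Ex : ℝ → ℝ := fun ρ => -ρ * Real.log (∑ p : X × X, Q p.1 * Q p.2 *
        (∑ y, Real.sqrt (W p.1 y * W p.2 y)) ^ (1 / ρ))
    (∃ ρ₁ : ℝ, 1 ≤ ρ₁ ∧ Ex ρ₁ = ρ₁ * R) ∧
    (∃ ρ₂ : ℝ, 1 ≤ ρ₂ ∧ Ex ρ₂ = (2 * ρ₂ - 1) * R) := by
  intro Ex
  set w : X × X → ℝ := fun p => Q p.1 * Q p.2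
  set Z : X × X → ℝ := fun p => ∑ y, √(W p.1 y * W p.2 y)
  have hEx : Ex = gallagerExponent w Z := rfl
  have hw0 : ∀ p, 0 ≤ w p := fun p => (mul_pos (hQpos _) (hQpos _)).le
  have hw1 : ∑ p, w p = 1 := by
    rw [Fintype.sum_prod_type, ← Fintype.sum_mul_sum, hQsum, one_mul]
  have hZ : ∀ p, 0 < Z p := fun p =>
    Finset.sum_pos (fun y _ => sqrt_pos.2 (mul_pos (hWpos _ y) (hWpos _ y))) Finset.univ_nonempty
  have hEx1 : R < Ex 1 := by
    rwa [hEx, gallagerExponent_one, sum_mul_sum_sqrt_mul_eq_sum_sq fun x y => (hWpos x y).le]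
  have hcont : ContinuousOn Ex (Ici 1) :=
    (continuousOn_gallagerExponent hw0 hw1 hZ).mono fun ρ (hρ : 1 ≤ ρ) => zero_lt_one.trans_le hρ
  have hbdd : ∀ ρ, 1 ≤ ρ → Ex ρ ≤ -∑ p, w p * log (Z p) := fun ρ hρ =>
    gallagerExponent_le hw0 hw1 hZ (zero_lt_one.trans_le hρ)
  constructor
  · obtain ⟨ρ, hρ, h⟩ := exists_eq_mul_add_of_continuousOn_Ici (c := 0) hcont hbdd hR (by linarith)
    exact ⟨ρ, hρ, by rw [h]; ring⟩
  · obtain ⟨ρ, hρ, h⟩ :=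
      exists_eq_mul_add_of_continuousOn_Ici (a := 2 * R) (c := -R) hcont hbdd (by linarith)
        (by linarith)
    exact ⟨ρ, hρ, by rw [h]; ring⟩

/-- For `0 < R < R₀(Q)` there exist `ρ₁ ≥ 1` with `E_x(ρ₁,Q) = ρ₁ R`
and `ρ₂ ≥ 1` with `E_x(ρ₂,Q) = (2ρ₂−1) R`. -/
theorem stmt_18 {X Y : Type*} [Fintype X] [Fintype Y] [Nonempty X] [Nonempty Y]
    (W : X → Y → ℝ) (hWpos : ∀ x y, 0 < W x y) (hWsum : ∀ x, ∑ y, W x y = 1)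
    (Q : X → ℝ) (hQpos : ∀ x, 0 < Q x) (hQsum : ∑ x, Q x = 1)
    (R : ℝ) (hR : 0 < R)
    (hRR0 : R < -Real.log (∑ y, (∑ x, Q x * Real.sqrt (W x y)) ^ 2)) :
    let Ex : ℝ → ℝ := fun ρ => -ρ * Real.log (∑ p : X × X, Q p.1 * Q p.2 *
        (∑ y, Real.sqrt (W p.1 y * W p.2 y)) ^ (1 / ρ))
    (∃ ρ₁ : ℝ, 1 ≤ ρ₁ ∧ Ex ρ₁ = ρ₁ * R) ∧
    (∃ ρ₂ : ℝ, 1 ≤ ρ₂ ∧ Ex ρ₂ = (2 * ρ₂ - 1) * R) :=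
  stmt_18_general W hWpos Q hQpos hQsum R hR hRR0
end
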